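/- arXiv:math/0603655 — 5 statements merged into one kernel-verified Lean document; each statement's English description precedes it below -/
import Mathlib

section
/- Let G_1,…,G_p be positive real m×n matrices, let R_1,…,R_p be positive real m-vectors and C_1,…,C_p positive real n-vectors such that |R_1|=…=|R_p|=|C_1|=…=|C_p|, and let α_1,…,α_p ≥ 0 with α_1+…+α_p = 1. Define G = Σ_{k=1}^p α_k G_k, R = Σ_{k=1}^p α_k R_k, and C = Σ_{k=1}^p α_k C_k. Then f(G;R,C) ≥ ∏_{k=1}^p f(G_k;R_k,C_k)^{α_k}. -/
open scoped BigOperators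

/-- `f(G;R,C)`: the infimum of `F(G;x,y) = ∑ i j, G i j * x i * y j` over positive
vectors `x, y` satisfying `∏ i, x i ^ R i = 1` and `∏ j, y j ^ C j = 1`. -/
noncomputable def scalingInf {m n : ℕ} (G : Fin m → Fin n → ℝ)
    (R : Fin m → ℝ) (C : Fin n → ℝ) : ℝ :=
  sInf {z : ℝ | ∃ (x : Fin m → ℝ) (y : Fin n → ℝ),
    (∀ i, 0 < x i) ∧ (∀ j, 0 < y j) ∧
    (∏ i, x i ^ R i) = 1 ∧ (∏ j, y j ^ C j) = 1 ∧
    z = ∑ i, ∑ j, G i j * x i * y j}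

private lemma scalingSet_nonneg {m n : ℕ} {G : Fin m → Fin n → ℝ} (hG : ∀ i j, 0 ≤ G i j)
    {R : Fin m → ℝ} {C : Fin n → ℝ} :
    ∀ z ∈ {z : ℝ | ∃ (x : Fin m → ℝ) (y : Fin n → ℝ),
      (∀ i, 0 < x i) ∧ (∀ j, 0 < y j) ∧
      (∏ i, x i ^ R i) = 1 ∧ (∏ j, y j ^ C j) = 1 ∧
      z = ∑ i, ∑ j, G i j * x i * y j}, 0 ≤ z := by
  rintro z ⟨x, y, hx, hy, -, -, rfl⟩
  exact Finset.sum_nonneg fun i _ => Finset.sum_nonneg fun j _ =>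
    mul_nonneg (mul_nonneg (hG i j) (hx i).le) (hy j).le

private lemma scalingSet_nonempty {m n : ℕ} (G : Fin m → Fin n → ℝ)
    (R : Fin m → ℝ) (C : Fin n → ℝ) :
    Set.Nonempty {z : ℝ | ∃ (x : Fin m → ℝ) (y : Fin n → ℝ),
      (∀ i, 0 < x i) ∧ (∀ j, 0 < y j) ∧
      (∏ i, x i ^ R i) = 1 ∧ (∏ j, y j ^ C j) = 1 ∧
      z = ∑ i, ∑ j, G i j * x i * y j} :=
  ⟨∑ i, ∑ j, G i j * 1 * 1, fun _ => 1, fun _ => 1, fun _ => one_pos, fun _ => one_pos,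
    by simp [Real.one_rpow], by simp [Real.one_rpow], rfl⟩

private lemma scalingInf_nonneg {m n : ℕ} {G : Fin m → Fin n → ℝ} (hG : ∀ i j, 0 ≤ G i j)
    (R : Fin m → ℝ) (C : Fin n → ℝ) : 0 ≤ scalingInf G R C := by
  rw [scalingInf]
  exact Real.sInf_nonneg (scalingSet_nonneg hG)

theorem scalingInf_log_concave {m n p : ℕ}
    (G : Fin p → Fin m → Fin n → ℝ) (hG : ∀ k i j, 0 < G k i j)
    (R : Fin p → Fin m → ℝ) (C : Fin p → Fin n → ℝ)
    (hR : ∀ k i, 0 < R k i) (hC : ∀ k j, 0 < C k j)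
    (N : ℝ) (hRN : ∀ k, ∑ i, R k i = N) (hCN : ∀ k, ∑ j, C k j = N)
    (α : Fin p → ℝ) (hα : ∀ k, 0 ≤ α k) (hα1 : ∑ k, α k = 1) :
    scalingInf (fun i j => ∑ k, α k * G k i j)
        (fun i => ∑ k, α k * R k i) (fun j => ∑ k, α k * C k j) ≥
      ∏ k, scalingInf (G k) (R k) (C k) ^ (α k) := by
  have hp : 0 < p := by
    rcases Nat.eq_zero_or_pos p with h | h
    · subst h; simp at hα1
    · exact h
  set k0 : Fin p := ⟨0, hp⟩
  have hfnn : ∀ k, 0 ≤ scalingInf (G k) (R k) (C k) := fun k =>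
    scalingInf_nonneg (fun i j => (hG k i j).le) _ _
  rw [ge_iff_le, scalingInf]
  apply le_csInf (scalingSet_nonempty _ _ _)
  rintro z ⟨x, y, hx, hy, hx1, hy1, rfl⟩
  by_cases hN : N = 0
  · -- degenerate case: m = 0, hence everything is 0
    have hm : m = 0 := by
      by_contra hm
      have hpos : 0 < ∑ i, R k0 i :=
        Finset.sum_pos (fun i _ => hR k0 i)
          (by simpa [Finset.univ_nonempty_iff, ← Fin.pos_iff_nonempty] using Nat.pos_of_ne_zero hm)
      rw [hRN k0, hN] at hpos; exact lt_irrefl _ hpos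
    have hz0 : (∑ i, ∑ j, (∑ k, α k * G k i j) * x i * y j) = 0 := by
      subst hm; simp
    rw [hz0]
    have hk : ∃ k, α k ≠ 0 := by
      by_contra h
      push_neg at h
      rw [Finset.sum_congr rfl (fun k _ => h k)] at hα1
      simp at hα1
    obtain ⟨k, hk⟩ := hk
    have hfk : scalingInf (G k) (R k) (C k) = 0 := by
      refine le_antisymm ?_ (hfnn k)
      rw [scalingInf]
      apply csInf_le ⟨0, scalingSet_nonneg (fun i j => (hG k i j).le)⟩
      subst hm
      exact ⟨fun i => 1, fun j => 1, fun _ => one_pos, fun _ => one_pos,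
        by simp, by simp [Real.one_rpow], by simp⟩
    calc ∏ k', scalingInf (G k') (R k') (C k') ^ α k'
        = 0 := Finset.prod_eq_zero (Finset.mem_univ k) (by rw [hfk, Real.zero_rpow hk])
      _ ≤ 0 := le_refl 0
  · -- main case
    set u : Fin p → ℝ := fun k => ∏ i, x i ^ R k i with hu_def
    set v : Fin p → ℝ := fun k => ∏ j, y j ^ C k j with hv_def
    have hu : ∀ k, 0 < u k := fun k =>
      Finset.prod_pos fun i _ => Real.rpow_pos_of_pos (hx i) _
    have hv : ∀ k, 0 < v k := fun k =>
      Finset.prod_pos fun j _ => Real.rpow_pos_of_pos (hy j) _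
    set t : Fin p → ℝ := fun k => u k ^ (-1 / N) with ht_def
    set s : Fin p → ℝ := fun k => v k ^ (-1 / N) with hs_def
    have ht : ∀ k, 0 < t k := fun k => Real.rpow_pos_of_pos (hu k) _
    have hs : ∀ k, 0 < s k := fun k => Real.rpow_pos_of_pos (hv k) _
    set F : Fin p → ℝ := fun k => ∑ i, ∑ j, G k i j * x i * y j with hF_def
    have hF : ∀ k, 0 ≤ F k := fun k =>
      Finset.sum_nonneg fun i _ => Finset.sum_nonneg fun j _ =>
        mul_nonneg (mul_nonneg (hG k i j).le (hx i).le) (hy j).le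
    -- each scalingInf is bounded by the scaled value
    have key : ∀ k, scalingInf (G k) (R k) (C k) ≤ t k * s k * F k := by
      intro k
      rw [scalingInf]
      apply csInf_le ⟨0, scalingSet_nonneg (fun i j => (hG k i j).le)⟩
      refine ⟨fun i => t k * x i, fun j => s k * y j,
        fun i => mul_pos (ht k) (hx i), fun j => mul_pos (hs k) (hy j), ?_, ?_, ?_⟩
      · have h1 : ∏ i, (t k * x i) ^ R k i = (∏ i, (t k) ^ R k i) * u k := by
          rw [hu_def, ← Finset.prod_mul_distrib]
          exact Finset.prod_congr rfl fun i _ => Real.mul_rpow (ht k).le (hx i).le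
        rw [h1, ← Real.rpow_sum_of_pos (ht k), hRN k, ht_def,
          ← Real.rpow_mul (hu k).le, div_mul_cancel₀ _ hN, Real.rpow_neg_one,
          inv_mul_cancel₀ (hu k).ne']
      · have h1 : ∏ j, (s k * y j) ^ C k j = (∏ j, (s k) ^ C k j) * v k := by
          rw [hv_def, ← Finset.prod_mul_distrib]
          exact Finset.prod_congr rfl fun j _ => Real.mul_rpow (hs k).le (hy j).le
        rw [h1, ← Real.rpow_sum_of_pos (hs k), hCN k, hs_def,
          ← Real.rpow_mul (hv k).le, div_mul_cancel₀ _ hN, Real.rpow_neg_one,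
          inv_mul_cancel₀ (hv k).ne']
      · rw [hF_def]
        simp only [Finset.mul_sum]
        exact Finset.sum_congr rfl fun i _ => Finset.sum_congr rfl fun j _ => by ring
    have huprod : ∏ k, u k ^ α k = 1 := by
      have h1 : ∀ k, u k ^ α k = ∏ i, x i ^ (α k * R k i) := by
        intro k
        rw [hu_def, ← Real.finset_prod_rpow _ _ (fun i _ => (Real.rpow_pos_of_pos (hx i) _).le)]
        exact Finset.prod_congr rfl fun i _ => by rw [← Real.rpow_mul (hx i).le, mul_comm]
      calc ∏ k, u k ^ α k
          = ∏ k, ∏ i, x i ^ (α k * R k i) := Finset.prod_congr rfl fun k _ => h1 k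
        _ = ∏ i, ∏ k, x i ^ (α k * R k i) := Finset.prod_comm
        _ = ∏ i, x i ^ (∑ k, α k * R k i) :=
            Finset.prod_congr rfl fun i _ => (Real.rpow_sum_of_pos (hx i) _ _).symm
        _ = 1 := hx1
    have hvprod : ∏ k, v k ^ α k = 1 := by
      have h1 : ∀ k, v k ^ α k = ∏ j, y j ^ (α k * C k j) := by
        intro k
        rw [hv_def, ← Real.finset_prod_rpow _ _ (fun j _ => (Real.rpow_pos_of_pos (hy j) _).le)]
        exact Finset.prod_congr rfl fun j _ => by rw [← Real.rpow_mul (hy j).le, mul_comm]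
      calc ∏ k, v k ^ α k
          = ∏ k, ∏ j, y j ^ (α k * C k j) := Finset.prod_congr rfl fun k _ => h1 k
        _ = ∏ j, ∏ k, y j ^ (α k * C k j) := Finset.prod_comm
        _ = ∏ j, y j ^ (∑ k, α k * C k j) :=
            Finset.prod_congr rfl fun j _ => (Real.rpow_sum_of_pos (hy j) _ _).symm
        _ = 1 := hy1
    have hT : ∏ k, t k ^ α k = 1 := by
      have h1 : ∀ k, t k ^ α k = (u k ^ α k) ^ (-1 / N) := fun k => by
        rw [ht_def, ← Real.rpow_mul (hu k).le, mul_comm, Real.rpow_mul (hu k).le]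
      rw [Finset.prod_congr rfl (fun k _ => h1 k),
        Real.finset_prod_rpow _ _ (fun k _ => (Real.rpow_pos_of_pos (hu k) _).le),
        huprod, Real.one_rpow]
    have hS : ∏ k, s k ^ α k = 1 := by
      have h1 : ∀ k, s k ^ α k = (v k ^ α k) ^ (-1 / N) := fun k => by
        rw [hs_def, ← Real.rpow_mul (hv k).le, mul_comm, Real.rpow_mul (hv k).le]
      rw [Finset.prod_congr rfl (fun k _ => h1 k),
        Real.finset_prod_rpow _ _ (fun k _ => (Real.rpow_pos_of_pos (hv k) _).le),
        hvprod, Real.one_rpow]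
    calc ∏ k, scalingInf (G k) (R k) (C k) ^ α k
        ≤ ∏ k, (t k * s k * F k) ^ α k :=
          Finset.prod_le_prod (fun k _ => Real.rpow_nonneg (hfnn k) _)
            (fun k _ => Real.rpow_le_rpow (hfnn k) (key k) (hα k))
      _ = (∏ k, t k ^ α k) * (∏ k, s k ^ α k) * (∏ k, F k ^ α k) := by
          rw [← Finset.prod_mul_distrib, ← Finset.prod_mul_distrib]
          exact Finset.prod_congr rfl fun k _ => by
            rw [Real.mul_rpow (mul_nonneg (ht k).le (hs k).le) (hF k),
              Real.mul_rpow (ht k).le (hs k).le]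
      _ = ∏ k, F k ^ α k := by rw [hT, hS, one_mul, one_mul]
      _ ≤ ∑ k, α k * F k :=
          Real.geom_mean_le_arith_mean_weighted _ _ _ (fun k _ => hα k) hα1 (fun k _ => hF k)
      _ = ∑ k, ∑ i, ∑ j, α k * G k i j * x i * y j := by
          refine Finset.sum_congr rfl fun k _ => ?_
          rw [hF_def]
          simp only [Finset.mul_sum]
          exact Finset.sum_congr rfl fun i _ => Finset.sum_congr rfl fun j _ => by ring
      _ = ∑ i, ∑ j, ∑ k, α k * G k i j * x i * y j := by
          rw [Finset.sum_comm]
          exact Finset.sum_congr rfl fun i _ => Finset.sum_comm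
      _ = ∑ i, ∑ j, (∑ k, α k * G k i j) * x i * y j := by
          refine Finset.sum_congr rfl fun i _ => Finset.sum_congr rfl fun j _ => ?_
          rw [Finset.sum_mul, Finset.sum_mul]
end

section
/- Let R_1=(r_{1,1},…,r_{1,m}) and R_2=(r_{2,1},…,r_{2,m}) be positive integer m-vectors with weakly decreasing entries, and let C_1=(c_{1,1},…,c_{1,n}) and C_2=(c_{2,1},…,c_{2,n}) be positive integer n-vectors with weakly decreasing entries, such that |R_1|=|R_2|=|C_1|=|C_2|, R_2 dominates R_1, and C_2 dominates C_1. Then T(R_1,C_1;1) ≥ T(R_2,C_2;1), where 1 denotes the m×n matrix of all ones, so that T(R,C;1) is the number of contingency tables with margins (R,C). -/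
open scoped BigOperators

/-- The total weight `T(R,C;W)` of contingency tables with row sums `R`,
column sums `C`, and weight `∏ W i j ^ D i j` (with the convention `0 ^ 0 = 1`). -/
noncomputable def tableWeight {m n : ℕ} (R : Fin m → ℕ) (C : Fin n → ℕ)
    (W : Fin m → Fin n → ℝ) : ℝ :=
  ∑' D : {D : Fin m → Fin n → ℕ //
      (∀ i, ∑ j, D i j = R i) ∧ (∀ j, ∑ i, D i j = C j)},
    ∏ i, ∏ j, W i j ^ D.1 i j

/-!
Merging row `p` of a table into row `q` maps the tables with row sums `R` onto the tables whose
margins are merged in the same way, and the fibre over a merged table `F` is in bijection with the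
compositions of `R p` bounded entrywise by the row `F q`. Their number is a symmetric unimodal
function of `R p` about `(R p + R q) / 2`, being an iterated moving sum of indicator functions.
Hence moving one unit from a row to a smaller row never decreases the number of tables.

If `a` dominates an antitone `b` and `a ≠ b`, let `l` be the first index with `a l < b l`; some
`k < l` has `b k < a k`, so `a l < b l ≤ b k < a k`, and moving a unit of `a` from `k` to `l`
keeps `a` dominating `b` while bringing it closer to `b`. Applied to the rows and, after
transposing, to the columns, this gives the theorem.
-/

open Finset

structure IsSymmUnimodal {M : Type*} [Preorder M] (f : ℤ → M) (N : ℤ) : Prop where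
  symm : ∀ a, f (N - a) = f a
  monotoneOn : MonotoneOn f {b | 2 * b ≤ N}

namespace IsSymmUnimodal

variable {M : Type*} {f : ℤ → M} {N : ℤ}

theorem le_of_abs_le [Preorder M] (hf : IsSymmUnimodal f N) {a b : ℤ}
    (hab : |2 * b - N| ≤ |2 * a - N|) : f a ≤ f b := by
  have reflect : ∀ a, ∃ a', 2 * a' ≤ N ∧ f a' = f a ∧ |2 * a' - N| = |2 * a - N| := by
    intro a
    rcases le_total (2 * a) N with h | h
    · exact ⟨a, h, rfl, rfl⟩
    · refine ⟨N - a, by linarith, hf.symm a, ?_⟩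
      rw [show 2 * (N - a) - N = -(2 * a - N) by ring, abs_neg]
  obtain ⟨a', ha', hfa, ha'abs⟩ := reflect a
  obtain ⟨b', hb', hfb, hb'abs⟩ := reflect b
  rw [← hfa, ← hfb]
  rw [← ha'abs, ← hb'abs, abs_of_nonpos (by linarith), abs_of_nonpos (by linarith)] at hab
  exact hf.monotoneOn ha' hb' (by linarith)

theorem movingSum [AddCommMonoid M] [PartialOrder M] [IsOrderedAddMonoid M]
    (hf : IsSymmUnimodal f N) (c : ℕ) :
    IsSymmUnimodal (fun a => ∑ s ∈ range (c + 1), f (a - s)) (N + c) where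
  symm a := by
    rw [← sum_range_reflect (fun s : ℕ => f (a - s))]
    refine sum_congr rfl fun s hs => ?_
    rw [← hf.symm]
    congr 1
    have := mem_range.1 hs
    omega
  monotoneOn := by
    have hconn : {b : ℤ | 2 * b ≤ N + c}.OrdConnected :=
      ⟨fun _ _ y hy z hz => show 2 * z ≤ N + c by linarith [hz.2, show 2 * y ≤ N + c from hy]⟩
    refine monotoneOn_of_le_succ hconn fun a _ _ ha => ?_
    replace ha : 2 * (a + 1) ≤ N + c := ha
    rw [Order.succ_eq_add_one, sum_range_succ, sum_range_succ']
    simp only [Nat.cast_add, Nat.cast_one, Nat.cast_zero, sub_zero, add_sub_add_right_eq_sub]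
    refine add_le_add_right (hf.le_of_abs_le ?_) _
    have := c.cast_nonneg (α := ℤ)
    calc |2 * (a + 1) - N| ≤ -(2 * (a - c) - N) := abs_le.2 ⟨by linarith, by linarith⟩
      _ ≤ |2 * (a - c) - N| := neg_le_abs _

end IsSymmUnimodal

-- Indexed by `a : ℤ` so that the moving sums of `IsSymmUnimodal.movingSum` need no truncation.
def boundedCompositions {n : ℕ} (c : Fin n → ℕ) (a : ℤ) : Finset (Fin n → ℕ) :=
  {x ∈ Fintype.piFinset fun j => range (c j + 1) | ((∑ j, x j : ℕ) : ℤ) = a}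

theorem mem_boundedCompositions {n : ℕ} {c : Fin n → ℕ} {a : ℤ} {x : Fin n → ℕ} :
    x ∈ boundedCompositions c a ↔ x ≤ c ∧ ((∑ j, x j : ℕ) : ℤ) = a := by
  simp [boundedCompositions, Pi.le_def]

theorem card_boundedCompositions_succ {n : ℕ} (c : Fin (n + 1) → ℕ) (a : ℤ) :
    #(boundedCompositions c a) =
      ∑ s ∈ range (c 0 + 1), #(boundedCompositions (Fin.tail c) (a - s)) := by
  rw [card_eq_sum_card_fiberwise (f := fun x => x 0) (t := range (c 0 + 1)) fun x hx => by
    simpa [Nat.lt_succ_iff] using (mem_boundedCompositions.1 hx).1 0]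
  refine sum_congr rfl fun s hs =>
    card_nbij' Fin.tail (fun y => (Fin.cons s y : Fin (n + 1) → ℕ)) ?_ ?_ ?_ ?_
  · intro x hx
    obtain ⟨⟨hxc, hxa⟩, rfl⟩ := by
      simpa only [mem_coe, mem_filter, mem_boundedCompositions] using hx
    refine mem_boundedCompositions.2 ⟨fun j => hxc j.succ, ?_⟩
    rw [Fin.sum_univ_succ] at hxa
    push_cast at hxa ⊢
    simp only [Fin.tail]
    linarith
  · intro y hy
    obtain ⟨hyc, hya⟩ := mem_boundedCompositions.1 hy
    simp only [mem_coe, mem_filter, mem_boundedCompositions, Fin.cons_zero, and_true]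
    refine ⟨fun j => Fin.cases (by simpa [Nat.lt_succ_iff] using hs) (fun j => hyc j) j, ?_⟩
    rw [Fin.sum_cons]
    push_cast at hya ⊢
    linarith
  · intro x hx
    simp only [mem_coe, mem_filter] at hx
    rw [← hx.2]
    exact Fin.cons_self_tail x
  · intro y _
    simp

theorem isSymmUnimodal_card_boundedCompositions {n : ℕ} (c : Fin n → ℕ) :
    IsSymmUnimodal (fun a => #(boundedCompositions c a)) ((∑ j, c j : ℕ) : ℤ) := by
  induction n with
  | zero =>
    have hcard : ∀ a, #(boundedCompositions c a) = if a = 0 then 1 else 0 := by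
      intro a
      split_ifs <;> simp [boundedCompositions, eq_comm, *]
    refine ⟨fun a => by simp [hcard], fun a _ b hb hab => ?_⟩
    replace hb : 2 * b ≤ 0 := by simpa using hb
    simp only [hcard]
    split_ifs <;> omega
  | succ n ih =>
    have h := (ih (Fin.tail c)).movingSum (c 0)
    rwa [← funext (card_boundedCompositions_succ c),
      show ((∑ j, Fin.tail c j : ℕ) : ℤ) + c 0 = ((∑ j, c j : ℕ) : ℤ) by
        simp [Fin.sum_univ_succ, Fin.tail, add_comm]] at h

section MergeInto

variable {ι M : Type*} [DecidableEq ι] [AddCommMonoid M] (p q : ι)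

def mergeInto (v : ι → M) (i : ι) : M :=
  if i = p then 0 else if i = q then v p + v q else v i

variable {p q}

theorem mergeInto_apply_apply {κ : Type*} (D : ι → κ → M) (i : ι) (j : κ) :
    mergeInto p q D i j = mergeInto p q (fun i => D i j) i := by
  unfold mergeInto
  split_ifs <;> rfl

theorem sum_mergeInto_apply_eq_mergeInto_sum {κ : Type*} (s : Finset κ) (D : κ → ι → M)
    (i : ι) : ∑ k ∈ s, mergeInto p q (D k) i = mergeInto p q (fun i => ∑ k ∈ s, D k i) i := by
  unfold mergeInto
  split_ifs <;> simp [sum_add_distrib]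

theorem sum_mergeInto [Fintype ι] (hpq : p ≠ q) (v : ι → M) :
    ∑ i, mergeInto p q v i = ∑ i, v i := by
  rw [← sum_erase_add _ _ (mem_univ p), ← sum_erase_add _ _ (mem_univ p),
    ← sum_erase_add _ _ (mem_erase.2 ⟨hpq.symm, mem_univ q⟩),
    ← sum_erase_add _ _ (mem_erase.2 ⟨hpq.symm, mem_univ q⟩)]
  have hrest : ∀ i ∈ (univ.erase p).erase q, mergeInto p q v i = v i := fun i hi => by
    simp [mergeInto, (ne_of_mem_erase hi), ne_of_mem_erase (mem_of_mem_erase hi)]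
  rw [sum_congr rfl hrest]
  simp only [mergeInto, if_pos, if_neg hpq.symm]
  abel

end MergeInto

section Tables

variable {m n : ℕ}

def tables (R : Fin m → ℕ) (C : Fin n → ℕ) : Finset (Fin m → Fin n → ℕ) :=
  {D ∈ Fintype.piFinset fun _ => Fintype.piFinset fun j => range (C j + 1) |
    (∀ i, ∑ j, D i j = R i) ∧ ∀ j, ∑ i, D i j = C j}

theorem mem_tables {R : Fin m → ℕ} {C : Fin n → ℕ} {D : Fin m → Fin n → ℕ} :
    D ∈ tables R C ↔ (∀ i, ∑ j, D i j = R i) ∧ ∀ j, ∑ i, D i j = C j := by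
  refine ⟨fun h => (mem_filter.1 h).2, fun h => mem_filter.2 ⟨?_, h⟩⟩
  simp only [Fintype.mem_piFinset, mem_range, Nat.lt_succ_iff]
  exact fun i j => h.2 j ▸ single_le_sum (f := fun i => D i j) (by simp) (mem_univ i)

theorem card_tables_comm (R : Fin m → ℕ) (C : Fin n → ℕ) :
    #(tables R C) = #(tables C R) :=
  card_nbij' Function.swap Function.swap (fun D hD => by simpa [mem_tables, and_comm] using hD)
    (fun D hD => by simpa [mem_tables, and_comm] using hD) (fun _ _ => rfl) (fun _ _ => rfl)

theorem tableWeight_one (R : Fin m → ℕ) (C : Fin n → ℕ) :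
    tableWeight R C (fun _ _ => 1) = #(tables R C) := by
  simp only [tableWeight, one_pow, prod_const_one, tsum_const, nsmul_eq_mul, mul_one]
  rw [← Nat.card_eq_finsetCard, Nat.card_congr (Equiv.subtypeEquivRight fun D => mem_tables.symm)]

variable {p q : Fin m}

theorem mem_tables_iff_mergeInto (hpq : p ≠ q) {R : Fin m → ℕ} {C : Fin n → ℕ}
    {D : Fin m → Fin n → ℕ} :
    D ∈ tables R C ↔ mergeInto p q D ∈ tables (mergeInto p q R) C ∧ ∑ j, D p j = R p := by
  simp only [mem_tables, mergeInto_apply_apply, sum_mergeInto_apply_eq_mergeInto_sum,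
    sum_mergeInto hpq]
  constructor
  · rintro ⟨hrow, hcol⟩
    exact ⟨⟨fun i => by simp only [hrow], hcol⟩, hrow p⟩
  · rintro ⟨⟨hrow, hcol⟩, hp⟩
    refine ⟨fun i => ?_, hcol⟩
    have := hrow i
    unfold mergeInto at this
    split_ifs at this with hip hiq
    · exact hip ▸ hp
    · subst hiq
      beta_reduce at this
      omega
    · exact this

theorem card_filter_mergeInto_eq (hpq : p ≠ q) {R : Fin m → ℕ} {C : Fin n → ℕ}
    {F : Fin m → Fin n → ℕ} (hF : F ∈ tables (mergeInto p q R) C) :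
    #{D ∈ tables R C | mergeInto p q D = F} = #(boundedCompositions (F q) (R p)) := by
  have hFp : F p = 0 := funext fun j => by
    have hrow := (mem_tables.1 hF).1 p
    simp only [mergeInto, if_pos, sum_eq_zero_iff, mem_univ, true_implies] at hrow
    exact hrow j
  let split (x : Fin n → ℕ) (i : Fin m) : Fin n → ℕ :=
    if i = p then x else if i = q then F q - x else F i
  refine card_nbij' (fun D => D p) split (fun D hD => ?_) (fun x hx => ?_) (fun D hD => ?_)
    (fun x _ => by simp [split])
  · obtain ⟨hDR, rfl⟩ := mem_filter.1 (mem_coe.1 hD)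
    refine mem_coe.2 (mem_boundedCompositions.2 ⟨fun j => ?_, ?_⟩)
    · simp [mergeInto, hpq.symm]
    · exact congrArg Nat.cast ((mem_tables.1 hDR).1 p)
  · obtain ⟨hxF, hxR⟩ := mem_boundedCompositions.1 (mem_coe.1 hx)
    have hmerge : mergeInto p q (split x) = F := funext fun i => by
      unfold mergeInto
      split_ifs with hip hiq
      · rw [hip, hFp]
      · simp [split, hiq, hpq.symm, add_tsub_cancel_of_le hxF]
      · simp [split, hip, hiq]
    have hsplit : split x ∈ tables R C := by
      refine (mem_tables_iff_mergeInto hpq).2 ⟨by rwa [hmerge], ?_⟩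
      simp only [split, if_pos]
      exact_mod_cast hxR
    exact mem_coe.2 (mem_filter.2 ⟨hsplit, hmerge⟩)
  · obtain ⟨-, rfl⟩ := mem_filter.1 (mem_coe.1 hD)
    funext i
    simp only [split, mergeInto, hpq.symm, if_pos, if_neg, not_false_eq_true]
    split_ifs with hip hiq
    · rw [hip]
    · rw [hiq, add_tsub_cancel_left]
    · rfl

theorem card_tables_eq_sum_card_boundedCompositions (hpq : p ≠ q) (R : Fin m → ℕ)
    (C : Fin n → ℕ) :
    #(tables R C) = ∑ F ∈ tables (mergeInto p q R) C, #(boundedCompositions (F q) (R p)) := by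
  rw [card_eq_sum_card_fiberwise fun D hD => ((mem_tables_iff_mergeInto hpq).1 hD).1]
  exact sum_congr rfl fun F hF => card_filter_mergeInto_eq hpq hF

theorem card_tables_le_of_mergeInto_eq (hpq : p ≠ q) {R R' : Fin m → ℕ}
    (hR : mergeInto p q R = mergeInto p q R') (hbal : |(R' p : ℤ) - R' q| ≤ |(R p : ℤ) - R q|)
    (C : Fin n → ℕ) : #(tables R C) ≤ #(tables R' C) := by
  rw [card_tables_eq_sum_card_boundedCompositions hpq R,
    card_tables_eq_sum_card_boundedCompositions hpq R', hR]
  refine sum_le_sum fun F hF => (isSymmUnimodal_card_boundedCompositions (F q)).le_of_abs_le ?_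
  have hFq : ∑ j, F q j = R' p + R' q := by
    simpa [mergeInto, hpq.symm] using (mem_tables.1 hF).1 q
  have hsum : R p + R q = R' p + R' q := by simpa [mergeInto, hpq.symm] using congrFun hR q
  rw [hFq]
  push_cast
  convert hbal using 2 <;> push_cast [← Nat.cast_inj (R := ℤ)] at hsum <;> linarith

theorem card_tables_le_of_add_single_eq {k l : Fin m} (hkl : k ≠ l) {a a' : Fin m → ℕ}
    (ha' : a' + Pi.single k 1 = a + Pi.single l 1) (hlk : a l + 2 ≤ a k) (C : Fin n → ℕ) :
    #(tables a C) ≤ #(tables a' C) := by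
  have hval (i : Fin m) : a' i + (if i = k then 1 else 0) = a i + (if i = l then 1 else 0) := by
    simpa [Pi.single_apply] using congrFun ha' i
  have hk : a' k + 1 = a k := by simpa [hkl] using hval k
  have hl : a' l = a l + 1 := by simpa [hkl.symm] using hval l
  have hmerge : mergeInto k l a = mergeInto k l a' := funext fun i => by
    unfold mergeInto
    split_ifs with hik hil
    · rfl
    · omega
    · simpa [hik, hil] using (hval i).symm
  have hbal : |(a' k : ℤ) - a' l| ≤ |(a k : ℤ) - a l| := by
    rw [abs_of_nonneg (by omega), abs_of_nonneg (by omega)]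
    omega
  exact card_tables_le_of_mergeInto_eq hkl hmerge hbal C

end Tables

section Dominance

variable {m : ℕ}

def prefixSum (R : Fin m → ℕ) (K : ℕ) : ℕ :=
  ∑ i ∈ univ.filter (fun i : Fin m => (i : ℕ) < K), R i

def Dominates (a b : Fin m → ℕ) : Prop :=
  (∀ K, prefixSum b K ≤ prefixSum a K) ∧ ∑ i, a i = ∑ i, b i

theorem prefixSum_succ (R : Fin m → ℕ) (l : Fin m) :
    prefixSum R (l + 1) = prefixSum R l + R l := by
  have : univ.filter (fun i : Fin m => (i : ℕ) < l + 1) =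
      insert l (univ.filter fun i : Fin m => (i : ℕ) < l) := by
    ext i
    simp [Fin.ext_iff]
    omega
  rw [prefixSum, this, sum_insert (by simp), add_comm, prefixSum]

theorem Dominates.exists_transfer {a b : Fin m → ℕ} (h : Dominates a b) (hne : a ≠ b) :
    ∃ k l : Fin m, k < l ∧ b k < a k ∧ a l < b l ∧
      ∀ K : ℕ, (k : ℕ) < K → K ≤ l → prefixSum b K < prefixSum a K := by
  have hex : {i | a i < b i}.Nonempty := by
    by_contra! hle
    refine hne (funext fun i => ((sum_eq_sum_iff_of_le fun i _ => ?_).1 h.2.symm i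
      (mem_univ i)).symm)
    exact not_lt.1 fun hi => hle.subset hi
  obtain ⟨l, hl, hlmin⟩ := wellFounded_lt.has_min _ hex
  have hbelow : ∀ i, i < l → b i ≤ a i := fun i hi => not_lt.1 fun h' => hlmin i h' hi
  have hpre : prefixSum b l < prefixSum a l := by
    have := h.1 (l + 1)
    rw [prefixSum_succ, prefixSum_succ] at this
    exact lt_of_add_lt_add_right (this.trans_lt (by simpa using hl))
  obtain ⟨k, hk, hbk⟩ := exists_lt_of_sum_lt hpre
  have hkl : k < l := by simpa using hk
  refine ⟨k, l, hkl, hbk, hl, fun K hkK hKl => sum_lt_sum (fun i hi => hbelow i ?_) ?_⟩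
  · have : (i : ℕ) < K := by simpa using hi
    exact Fin.lt_def.2 (by omega)
  · exact ⟨k, by simpa using hkK, hbk⟩

theorem Dominates.of_transfer {a a' b : Fin m → ℕ} {k l : Fin m} (h : Dominates a b)
    (ha' : a' + Pi.single k 1 = a + Pi.single l 1) (hkl : k < l)
    (hpre : ∀ K : ℕ, (k : ℕ) < K → K ≤ l → prefixSum b K < prefixSum a K) :
    Dominates a' b := by
  have hsum : ∀ s : Finset (Fin m),
      ∑ i ∈ s, a' i + (if k ∈ s then 1 else 0) = ∑ i ∈ s, a i + (if l ∈ s then 1 else 0) :=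
    fun s => by simpa [sum_add_distrib, sum_pi_single'] using congrArg (fun v => ∑ i ∈ s, v i) ha'
  have htotal : ∑ i, a' i = ∑ i, b i := by
    have := hsum univ
    simp only [mem_univ, if_true, add_left_inj] at this
    exact this.trans h.2
  refine ⟨fun K => ?_, htotal⟩
  have hK : prefixSum a' K + (if (k : ℕ) < K then 1 else 0) =
      prefixSum a K + (if (l : ℕ) < K then 1 else 0) := by
    simpa [prefixSum] using hsum (univ.filter fun i : Fin m => (i : ℕ) < K)
  have hkl' : (k : ℕ) < l := hkl
  have := h.1 K
  by_cases hK' : (k : ℕ) < K ∧ K ≤ l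
  · have := hpre K hK'.1 hK'.2
    split_ifs at hK <;> omega
  · split_ifs at hK <;> omega

end Dominance

theorem card_tables_le_of_dominates {m n : ℕ} {a b : Fin m → ℕ} (hb : Antitone b)
    (h : Dominates a b) (C : Fin n → ℕ) : #(tables a C) ≤ #(tables b C) := by
  induction hd : ∑ i, (a i - b i) using Nat.strong_induction_on generalizing a with
  | _ d ih =>
  by_cases hab : a = b
  · rw [hab]
  obtain ⟨k, l, hkl, hbk, hal, hpre⟩ := h.exists_transfer hab
  have hbkl := hb hkl.le
  obtain ⟨a', ha'⟩ : ∃ a', a' + Pi.single k 1 = a + Pi.single l 1 :=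
    ⟨a + Pi.single l 1 - Pi.single k 1, funext fun i => by
      simp only [Pi.add_apply, Pi.sub_apply, Pi.single_apply]
      split_ifs <;> subst_vars <;> omega⟩
  have hval (i : Fin m) : a' i + (if i = k then 1 else 0) = a i + (if i = l then 1 else 0) := by
    simpa [Pi.single_apply] using congrFun ha' i
  have hmeasure : ∑ i, (a' i - b i) < d := by
    refine hd ▸ sum_lt_sum (fun i _ => ?_) ⟨k, mem_univ k, ?_⟩
    · have := hval i
      by_cases hil : i = l
      · subst hil
        split_ifs at this <;> omega
      · split_ifs at this <;> omega
    · have := hval k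
      simp only [if_pos, if_neg hkl.ne] at this
      omega
  calc #(tables a C) ≤ #(tables a' C) :=
        card_tables_le_of_add_single_eq hkl.ne ha' (by omega) C
    _ ≤ #(tables b C) := ih _ hmeasure (h.of_transfer ha' hkl hpre) rfl

theorem tableCount_antitone_domination_general {m n : ℕ}
    (R₁ R₂ : Fin m → ℕ) (C₁ C₂ : Fin n → ℕ)
    -- weakly decreasing entries
    (hR₁dec : ∀ i i' : Fin m, i ≤ i' → R₁ i' ≤ R₁ i)
    (hC₁dec : ∀ j j' : Fin n, j ≤ j' → C₁ j' ≤ C₁ j)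
    -- equal total sums
    (h₁₂ : ∑ i, R₁ i = ∑ i, R₂ i)
    (h₃₄ : ∑ j, C₁ j = ∑ j, C₂ j)
    -- R₂ dominates R₁ and C₂ dominates C₁
    (hRdom : ∀ K : ℕ, ∑ i ∈ Finset.univ.filter (fun i : Fin m => (i : ℕ) < K), R₁ i ≤
        ∑ i ∈ Finset.univ.filter (fun i : Fin m => (i : ℕ) < K), R₂ i)
    (hCdom : ∀ K : ℕ, ∑ j ∈ Finset.univ.filter (fun j : Fin n => (j : ℕ) < K), C₁ j ≤
        ∑ j ∈ Finset.univ.filter (fun j : Fin n => (j : ℕ) < K), C₂ j) :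
    tableWeight R₁ C₁ (fun _ _ => (1 : ℝ)) ≥ tableWeight R₂ C₂ (fun _ _ => (1 : ℝ)) := by
  rw [ge_iff_le, tableWeight_one, tableWeight_one, Nat.cast_le]
  calc #(tables R₂ C₂) = #(tables C₂ R₂) := card_tables_comm R₂ C₂
    _ ≤ #(tables C₁ R₂) := card_tables_le_of_dominates hC₁dec ⟨hCdom, h₃₄.symm⟩ R₂
    _ = #(tables R₂ C₁) := card_tables_comm C₁ R₂
    _ ≤ #(tables R₁ C₁) := card_tables_le_of_dominates hR₁dec ⟨hRdom, h₁₂.symm⟩ C₁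

theorem tableCount_antitone_domination {m n : ℕ}
    (R₁ R₂ : Fin m → ℕ) (C₁ C₂ : Fin n → ℕ)
    (hR₁pos : ∀ i, 0 < R₁ i) (hR₂pos : ∀ i, 0 < R₂ i)
    (hC₁pos : ∀ j, 0 < C₁ j) (hC₂pos : ∀ j, 0 < C₂ j)
    -- weakly decreasing entries
    (hR₁dec : ∀ i i' : Fin m, i ≤ i' → R₁ i' ≤ R₁ i)
    (hR₂dec : ∀ i i' : Fin m, i ≤ i' → R₂ i' ≤ R₂ i)
    (hC₁dec : ∀ j j' : Fin n, j ≤ j' → C₁ j' ≤ C₁ j)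
    (hC₂dec : ∀ j j' : Fin n, j ≤ j' → C₂ j' ≤ C₂ j)
    -- equal total sums
    (h₁₂ : ∑ i, R₁ i = ∑ i, R₂ i)
    (h₂₃ : ∑ i, R₂ i = ∑ j, C₁ j)
    (h₃₄ : ∑ j, C₁ j = ∑ j, C₂ j)
    -- R₂ dominates R₁ and C₂ dominates C₁
    (hRdom : ∀ K : ℕ, ∑ i ∈ Finset.univ.filter (fun i : Fin m => (i : ℕ) < K), R₁ i ≤
        ∑ i ∈ Finset.univ.filter (fun i : Fin m => (i : ℕ) < K), R₂ i)
    (hCdom : ∀ K : ℕ, ∑ j ∈ Finset.univ.filter (fun j : Fin n => (j : ℕ) < K), C₁ j ≤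
        ∑ j ∈ Finset.univ.filter (fun j : Fin n => (j : ℕ) < K), C₂ j) :
    tableWeight R₁ C₁ (fun _ _ => (1 : ℝ)) ≥ tableWeight R₂ C₂ (fun _ _ => (1 : ℝ)) :=
  tableCount_antitone_domination_general R₁ R₂ C₁ C₂ hR₁dec hC₁dec h₁₂ h₃₄ hRdom hCdom
end

section
/- Let W=(w_{ij}) be a positive real m×n matrix and let R=(r_1,…,r_m), C=(c_1,…,c_n) be positive integer vectors with |R|=|C|=N. Then T(R,C;W) = (∏_{i=1}^m 1/r_i!) · (∏_{j=1}^n 1/c_j!) · ∫_{Mat(m,n)} per A(G;R,C) dG, where dG is the exponential measure associated with W. -/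
open scoped BigOperators
open MeasureTheory

/-- The permanent of a (square, `|ι| = |κ|`) matrix, as a sum over bijections. -/
noncomputable def perm {ι κ : Type*} [Fintype ι] [Fintype κ] [DecidableEq ι] [DecidableEq κ]
    (A : Matrix ι κ ℝ) : ℝ :=
  ∑ σ : ι ≃ κ, ∏ i, A i (σ i)

/-- The `N × N` block matrix `A(G;R,C)` whose `(i,j)`-th block, of size `R i × C j`,
is filled with copies of `G i j`. -/
def blockMat {m n : ℕ} (G : Fin m → Fin n → ℝ) (R : Fin m → ℕ) (C : Fin n → ℕ) :
    Matrix ((i : Fin m) × Fin (R i)) ((j : Fin n) × Fin (C j)) ℝ :=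
  fun a b => G a.1 b.1

/-- The exponential measure `dG` on `Mat(m,n)` associated with a positive matrix `W`:
its density w.r.t. Lebesgue measure is `∏ i j, (W i j)⁻¹ exp (-(G i j) / W i j)` on
matrices with all entries positive, and `0` elsewhere. -/
noncomputable def expMeasure {m n : ℕ} (W : Fin m → Fin n → ℝ) :
    Measure (Fin m → Fin n → ℝ) :=
  volume.withDensity fun G =>
    ENNReal.ofReal (∏ i, ∏ j,
      if 0 < G i j then (W i j)⁻¹ * Real.exp (-(G i j) / W i j) else 0)

/-!
Expanding the permanent over the bijections `σ` from row indices to column indices gives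
`per A(G;R,C) = ∑_σ ∏ g_ij ^ d_ij(σ)`, where `d_ij(σ)` counts the rows of block `i` sent into
block `j`: a contingency table with margins `(R, C)`. Under `dG` the entries are independent
exponential variables with moments `∫ g ^ d = d! w ^ d`, so the integral equals
`∑_σ ∏ d_ij(σ)! w_ij ^ d_ij(σ)`. It remains to see that each table `D` comes from exactly
`∏ r_i! ∏ c_j! / ∏ d_ij!` bijections. Factor `σ = v⁻¹ ∘ u` through the set of cells
`Σ (i, j), Fin d_ij`, with `u` preserving rows and `v` preserving columns: there are
`∏ r_i! · ∏ c_j!` pairs `(u, v)`, and a bijection with table `D` has `∏ d_ij!` factorizations.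
-/

section Counting

open Finset Nat

theorem card_sigma_fiber_fst {ι : Type*} [Fintype ι] [DecidableEq ι] (R : ι → ℕ) (i : ι) :
    Fintype.card {a : Σ i, Fin (R i) // a.1 = i} = R i := by
  rw [Fintype.card_congr (Equiv.sigmaSubtype i), Fintype.card_fin]

theorem card_equiv_comp_eq {α β ι : Type*} [Fintype α] [Fintype β] [Fintype ι] [DecidableEq α]
    [DecidableEq β] [DecidableEq ι] (f : α → ι) (g : β → ι) :
    Fintype.card {σ : α ≃ β // g ∘ σ = f} =
      if ∀ i, Fintype.card {a // f a = i} = Fintype.card {b // g b = i} then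
        ∏ i, (Fintype.card {a // f a = i})!
      else 0 := by
  split_ifs with h
  · let σ₀ : α ≃ β := Equiv.ofFiberEquiv fun i => Fintype.equivOfCardEq (h i)
    have hσ₀ : g ∘ σ₀ = f := funext (Equiv.ofFiberEquiv_map _)
    -- `σ ↦ σ₀⁻¹ ∘ σ` identifies these `σ` with the permutations of `α` preserving `f`
    rw [← DomMulAct.stabilizer_card f]
    refine Fintype.card_congr
      (Equiv.subtypeEquiv (Equiv.equivCongr (Equiv.refl α) σ₀.symm) fun σ => ?_)
    rw [← hσ₀]
    constructor <;> intro hσ <;> funext a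
    · simpa using congrFun hσ a
    · simpa using congrFun hσ a
  · rw [Fintype.card_eq_zero_iff]
    refine ⟨fun ⟨σ, hσ⟩ => h fun i => Fintype.card_congr (σ.subtypeEquiv fun a => ?_)⟩
    rw [← hσ]
    rfl

section Fibers

variable {α ι κ : Type*} [Fintype α] [DecidableEq ι] [DecidableEq κ]

theorem sum_card_fiber_eq_card_fiber_fst [Fintype κ] (h : α → ι × κ) (i : ι) :
    ∑ j, Fintype.card {a // h a = (i, j)} = Fintype.card {a // (h a).1 = i} := by
  simp only [Fintype.card_subtype]
  rw [card_eq_sum_card_fiberwise (f := fun a => (h a).2) (t := univ) (by simp)]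
  simp [filter_filter, Prod.ext_iff]

theorem sum_card_fiber_eq_card_fiber_snd [Fintype ι] (h : α → ι × κ) (j : κ) :
    ∑ i, Fintype.card {a // h a = (i, j)} = Fintype.card {a // (h a).2 = j} := by
  simp only [Fintype.card_subtype]
  rw [card_eq_sum_card_fiberwise (f := fun a => (h a).1) (t := univ) (by simp)]
  simp [filter_filter, Prod.ext_iff, and_comm]

end Fibers

section ContingencyTable

variable {α β ι κ : Type*} [Fintype α] [DecidableEq ι] [DecidableEq κ]

def contingencyTable (p : α → ι) (q : β → κ) (σ : α ≃ β) (i : ι) (j : κ) : ℕ :=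
  Fintype.card {a // (p a, q (σ a)) = (i, j)}

variable (p : α → ι) (q : β → κ)

theorem sum_contingencyTable_row [Fintype κ] (σ : α ≃ β) (i : ι) :
    ∑ j, contingencyTable p q σ i j = Fintype.card {a // p a = i} :=
  sum_card_fiber_eq_card_fiber_fst _ i

theorem sum_contingencyTable_col [Fintype β] [Fintype ι] (σ : α ≃ β) (j : κ) :
    ∑ i, contingencyTable p q σ i j = Fintype.card {b // q b = j} :=
  (sum_card_fiber_eq_card_fiber_snd _ j).trans
    (Fintype.card_congr (σ.subtypeEquiv fun _ => Iff.rfl))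

theorem prod_pow_contingencyTable [Fintype ι] [Fintype κ] {M : Type*} [CommMonoid M]
    (F : ι → κ → M) (σ : α ≃ β) :
    ∏ i, ∏ j, F i j ^ contingencyTable p q σ i j = ∏ a, F (p a) (q (σ a)) := by
  rw [← Fintype.prod_fiberwise' (fun a => (p a, q (σ a))) fun c => F c.1 c.2,
    Fintype.prod_prod_type]
  simp [contingencyTable]

def factorThroughCellsEquiv {T : Type*} (cell : T → ι × κ) (σ : α ≃ β) :
    {x : {u : α ≃ T // (fun t => (cell t).1) ∘ u = p} ×
        {v : β ≃ T // (fun t => (cell t).2) ∘ v = q} // x.1.1.trans x.2.1.symm = σ} ≃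
      {w : α ≃ T // cell ∘ w = fun a => (p a, q (σ a))} where
  toFun x := ⟨x.1.1.1, funext fun a => by
    obtain ⟨⟨⟨u, hu⟩, ⟨v, hv⟩⟩, rfl⟩ := x
    refine Prod.ext (congrFun hu a) ?_
    simpa using congrFun hv (v.symm (u a))⟩
  invFun w := ⟨(⟨w.1, funext fun a => congrArg Prod.fst (congrFun w.2 a)⟩,
      ⟨σ.symm.trans w.1, funext fun b => by
        simpa using congrArg Prod.snd (congrFun w.2 (σ.symm b))⟩),
    by ext; simp⟩
  left_inv := by
    rintro ⟨⟨⟨u, hu⟩, ⟨v, hv⟩⟩, rfl⟩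
    ext <;> simp
  right_inv _ := rfl

variable [Fintype β] [Fintype ι] [Fintype κ] [DecidableEq α] [DecidableEq β]

theorem card_contingencyTable_eq_mul_prod_factorial (D : ι → κ → ℕ)
    (hrow : ∀ i, ∑ j, D i j = Fintype.card {a // p a = i})
    (hcol : ∀ j, ∑ i, D i j = Fintype.card {b // q b = j}) :
    Fintype.card {σ : α ≃ β // contingencyTable p q σ = D} * ∏ i, ∏ j, (D i j)! =
      (∏ i, (Fintype.card {a // p a = i})!) * ∏ j, (Fintype.card {b // q b = j})! := by
  let T := Σ c : ι × κ, Fin (D c.1 c.2)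
  have hT (c : ι × κ) : Fintype.card {t : T // t.1 = c} = D c.1 c.2 :=
    card_sigma_fiber_fst (fun c => D c.1 c.2) c
  have hcells (σ : α ≃ β) : (∀ c, Fintype.card {a // (p a, q (σ a)) = c} =
      Fintype.card {t : T // t.1 = c}) ↔ contingencyTable p q σ = D := by
    simp only [hT, funext_iff, Prod.forall]
    rfl
  let U := {u : α ≃ T // (fun t => t.1.1) ∘ u = p}
  let V := {v : β ≃ T // (fun t => t.1.2) ∘ v = q}
  calc Fintype.card {σ : α ≃ β // contingencyTable p q σ = D} * ∏ i, ∏ j, (D i j)!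
      = ∑ σ : α ≃ β, if contingencyTable p q σ = D then ∏ i, ∏ j, (D i j)! else 0 := by
        rw [sum_ite, sum_const_zero, add_zero, sum_const, smul_eq_mul, Fintype.card_subtype]
    _ = ∑ σ : α ≃ β, Fintype.card {w : α ≃ T // Sigma.fst ∘ w = fun a => (p a, q (σ a))} := by
        refine sum_congr rfl fun σ _ => ?_
        rw [card_equiv_comp_eq]
        by_cases h : contingencyTable p q σ = D
        · rw [if_pos h, if_pos ((hcells σ).2 h), Fintype.prod_prod_type, ← h]
          rfl
        · rw [if_neg h, if_neg (mt (hcells σ).1 h)]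
    _ = ∑ σ : α ≃ β, Fintype.card {x : U × V // x.1.1.trans x.2.1.symm = σ} :=
        sum_congr rfl fun σ _ => (Fintype.card_congr (factorThroughCellsEquiv p q _ σ)).symm
    _ = Fintype.card (U × V) := by
        rw [← Fintype.card_sigma]
        exact Fintype.card_congr (Equiv.sigmaFiberEquiv _)
    _ = _ := by
        rw [Fintype.card_prod, card_equiv_comp_eq, card_equiv_comp_eq, if_pos, if_pos]
        · intro j
          rw [← hcol, ← sum_card_fiber_eq_card_fiber_snd Sigma.fst]
          exact sum_congr rfl fun i _ => (hT (i, j)).symm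
        · intro i
          rw [← hrow, ← sum_card_fiber_eq_card_fiber_fst Sigma.fst]
          exact sum_congr rfl fun j _ => (hT (i, j)).symm

theorem mem_image_contingencyTable_iff (D : ι → κ → ℕ) :
    D ∈ univ.image (contingencyTable p q) ↔
      (∀ i, ∑ j, D i j = Fintype.card {a // p a = i}) ∧
        ∀ j, ∑ i, D i j = Fintype.card {b // q b = j} := by
  refine ⟨?_, fun ⟨hrow, hcol⟩ => ?_⟩
  · intro hD
    obtain ⟨σ, -, rfl⟩ := mem_image.1 hD
    exact ⟨sum_contingencyTable_row p q σ, sum_contingencyTable_col p q σ⟩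
  · have hcount := card_contingencyTable_eq_mul_prod_factorial p q D hrow hcol
    obtain ⟨σ, hσ⟩ : Nonempty {σ : α ≃ β // contingencyTable p q σ = D} := by
      rw [← Fintype.card_pos_iff]
      refine Nat.pos_of_ne_zero fun h => ?_
      rw [h, zero_mul] at hcount
      exact (mul_ne_zero (prod_ne_zero_iff.2 fun i _ => factorial_ne_zero _)
        (prod_ne_zero_iff.2 fun j _ => factorial_ne_zero _)) hcount.symm
    exact mem_image.2 ⟨σ, mem_univ σ, hσ⟩

theorem sum_prod_factorial_mul_contingencyTable {S : Type*} [CommSemiring S]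
    (g : (ι → κ → ℕ) → S) :
    ∑ σ : α ≃ β, (∏ i, ∏ j, ((contingencyTable p q σ i j)! : S)) * g (contingencyTable p q σ) =
      (∏ i, ((Fintype.card {a // p a = i})! : S)) * (∏ j, ((Fintype.card {b // q b = j})! : S)) *
        ∑ D ∈ univ.image (contingencyTable p q), g D := by
  rw [sum_comp (fun D => (∏ i, ∏ j, ((D i j)! : S)) * g D), mul_sum]
  refine sum_congr rfl fun D hD => ?_
  obtain ⟨hrow, hcol⟩ := (mem_image_contingencyTable_iff p q D).1 hD
  have hcount := card_contingencyTable_eq_mul_prod_factorial p q D hrow hcol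
  rw [Fintype.card_subtype] at hcount
  rw [nsmul_eq_mul, ← mul_assoc]
  congr 1
  convert congrArg (Nat.cast : ℕ → S) hcount using 1 <;> push_cast <;> rfl

end ContingencyTable

end Counting

section Exponential

open Nat Real Set

noncomputable def expDensity (w x : ℝ) : ℝ :=
  if 0 < x then w⁻¹ * exp (-x / w) else 0

variable {w : ℝ}

theorem expDensity_nonneg (hw : 0 < w) (x : ℝ) : 0 ≤ expDensity w x := by
  unfold expDensity; split_ifs <;> positivity

@[fun_prop]
theorem measurable_expDensity (w : ℝ) : Measurable (expDensity w) :=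
  Measurable.ite measurableSet_Ioi (by fun_prop) measurable_const

theorem expDensity_mul_pow_eq_indicator (w : ℝ) (d : ℕ) :
    (fun x => expDensity w x * x ^ d) = (Ioi 0).indicator fun x => w⁻¹ * exp (-x / w) * x ^ d := by
  funext x
  by_cases hx : 0 < x <;> simp [expDensity, indicator, hx]

theorem integrable_expDensity_mul_pow (hw : 0 < w) (d : ℕ) :
    Integrable fun x => expDensity w x * x ^ d := by
  rw [expDensity_mul_pow_eq_indicator, integrable_indicator_iff measurableSet_Ioi]
  refine IntegrableOn.congr_fun ((integrableOn_rpow_mul_exp_neg_mul_rpow (s := d)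
    (by linarith [d.cast_nonneg (α := ℝ)]) one_pos (inv_pos.mpr hw)).const_mul w⁻¹)
    (fun x _ => ?_) measurableSet_Ioi
  rw [rpow_one, rpow_natCast, neg_div, div_eq_inv_mul, neg_mul]
  ring

theorem integral_expDensity_mul_pow (hw : 0 < w) (d : ℕ) :
    ∫ x, expDensity w x * x ^ d = d ! * w ^ d := by
  rw [expDensity_mul_pow_eq_indicator, integral_indicator measurableSet_Ioi]
  have hΓ := integral_rpow_mul_exp_neg_mul_Ioi (a := d + 1) (by positivity) (inv_pos.mpr hw)
  rw [add_sub_cancel_right, one_div, inv_inv, Gamma_nat_eq_factorial, ← Nat.cast_succ,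
    rpow_natCast] at hΓ
  calc ∫ x in Ioi 0, w⁻¹ * exp (-x / w) * x ^ d
      = w⁻¹ * ∫ x in Ioi 0, x ^ (d : ℝ) * exp (-(w⁻¹ * x)) := by
        rw [← integral_const_mul]
        refine setIntegral_congr_fun measurableSet_Ioi fun x _ => ?_
        rw [rpow_natCast, neg_div, div_eq_inv_mul]
        ring
    _ = d ! * w ^ d := by
        rw [hΓ, pow_succ]
        field_simp

section Matrix

variable {m n : ℕ} {W : Fin m → Fin n → ℝ}

noncomputable def matrixExpDensity (W G : Fin m → Fin n → ℝ) : ℝ :=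
  ∏ i, ∏ j, expDensity (W i j) (G i j)

theorem matrixExpDensity_nonneg (hW : ∀ i j, 0 < W i j) (G : Fin m → Fin n → ℝ) :
    0 ≤ matrixExpDensity W G :=
  Finset.prod_nonneg fun i _ => Finset.prod_nonneg fun j _ => expDensity_nonneg (hW i j) _

theorem expMeasure_eq_withDensity (W : Fin m → Fin n → ℝ) :
    expMeasure W = volume.withDensity fun G => ENNReal.ofReal (matrixExpDensity W G) := rfl

theorem toReal_ofReal_matrixExpDensity (hW : ∀ i j, 0 < W i j) :
    (fun G => (ENNReal.ofReal (matrixExpDensity W G)).toReal) = matrixExpDensity W :=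
  funext fun G => ENNReal.toReal_ofReal (matrixExpDensity_nonneg hW G)

theorem integral_expMeasure (hW : ∀ i j, 0 < W i j) (f : (Fin m → Fin n → ℝ) → ℝ) :
    ∫ G, f G ∂expMeasure W = ∫ G, matrixExpDensity W G * f G := by
  rw [expMeasure_eq_withDensity, integral_withDensity_eq_integral_toReal_smul
    (by unfold matrixExpDensity; fun_prop) (.of_forall fun _ => ENNReal.ofReal_lt_top)]
  simp_rw [smul_eq_mul, congrFun (toReal_ofReal_matrixExpDensity hW)]

theorem integrable_expMeasure_iff (hW : ∀ i j, 0 < W i j) (f : (Fin m → Fin n → ℝ) → ℝ) :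
    Integrable f (expMeasure W) ↔ Integrable fun G => matrixExpDensity W G * f G := by
  rw [expMeasure_eq_withDensity, integrable_withDensity_iff_integrable_smul'
    (by unfold matrixExpDensity; fun_prop) (.of_forall fun _ => ENNReal.ofReal_lt_top)]
  simp_rw [smul_eq_mul, congrFun (toReal_ofReal_matrixExpDensity hW)]

theorem matrixExpDensity_mul_monomial (W G : Fin m → Fin n → ℝ) (D : Fin m → Fin n → ℕ) :
    matrixExpDensity W G * ∏ i, ∏ j, G i j ^ D i j =
      ∏ i, ∏ j, expDensity (W i j) (G i j) * G i j ^ D i j := by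
  simp only [matrixExpDensity, ← Finset.prod_mul_distrib]

theorem integrable_monomial_expMeasure (hW : ∀ i j, 0 < W i j) (D : Fin m → Fin n → ℕ) :
    Integrable (fun G => ∏ i, ∏ j, G i j ^ D i j) (expMeasure W) := by
  simp_rw [integrable_expMeasure_iff hW, matrixExpDensity_mul_monomial]
  exact Integrable.fintype_prod
    (f := fun i (g : Fin n → ℝ) => ∏ j, expDensity (W i j) (g j) * g j ^ D i j) fun i =>
      Integrable.fintype_prod (f := fun j x => expDensity (W i j) x * x ^ D i j)
        fun j => integrable_expDensity_mul_pow (hW i j) (D i j)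

theorem integral_monomial_expMeasure (hW : ∀ i j, 0 < W i j) (D : Fin m → Fin n → ℕ) :
    ∫ G, ∏ i, ∏ j, G i j ^ D i j ∂expMeasure W = ∏ i, ∏ j, (D i j)! * W i j ^ D i j := by
  simp_rw [integral_expMeasure hW, matrixExpDensity_mul_monomial]
  rw [integral_fintype_prod_volume_eq_prod
    (f := fun i (g : Fin n → ℝ) => ∏ j, expDensity (W i j) (g j) * g j ^ D i j)]
  refine Finset.prod_congr rfl fun i _ => ?_
  rw [integral_fintype_prod_volume_eq_prod (f := fun j x => expDensity (W i j) x * x ^ D i j)]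
  exact Finset.prod_congr rfl fun j _ => integral_expDensity_mul_pow (hW i j) (D i j)

end Matrix

end Exponential

open Finset Nat in
theorem tableWeight_eq_integral_perm_general {m n : ℕ}
    (W : Fin m → Fin n → ℝ) (hW : ∀ i j, 0 < W i j)
    (R : Fin m → ℕ) (C : Fin n → ℕ) :
    tableWeight R C W =
      (∏ i, (1 : ℝ) / (Nat.factorial (R i) : ℝ)) *
      (∏ j, (1 : ℝ) / (Nat.factorial (C j) : ℝ)) *
      ∫ G, perm (blockMat G R C) ∂(expMeasure W) := by
  let table := contingencyTable (β := Σ j, Fin (C j)) (Sigma.fst : (Σ i, Fin (R i)) → Fin m)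
    Sigma.fst
  have hperm (G : Fin m → Fin n → ℝ) :
      perm (blockMat G R C) = ∑ σ, ∏ i, ∏ j, G i j ^ table σ i j :=
    sum_congr rfl fun σ _ => (prod_pow_contingencyTable _ _ G σ).symm
  have hintegral : ∫ G, perm (blockMat G R C) ∂(expMeasure W) =
      ∑ σ, (∏ i, ∏ j, ((table σ i j)! : ℝ)) * ∏ i, ∏ j, W i j ^ table σ i j := by
    simp_rw [hperm]
    rw [integral_finsetSum _ fun σ _ => integrable_monomial_expMeasure hW _]
    simp_rw [integral_monomial_expMeasure hW, prod_mul_distrib]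
  have htables : tableWeight R C W = ∑ D ∈ univ.image table, ∏ i, ∏ j, W i j ^ D i j := by
    have hmem (D : Fin m → Fin n → ℕ) : ((∀ i, ∑ j, D i j = R i) ∧ ∀ j, ∑ i, D i j = C j) ↔
        D ∈ univ.image table := by
      rw [mem_image_contingencyTable_iff]
      simp only [card_sigma_fiber_fst]
    rw [tableWeight, ← Finset.tsum_subtype]
    exact (Equiv.subtypeEquivRight hmem).tsum_eq fun D => ∏ i, ∏ j, W i j ^ D.1 i j
  rw [hintegral, sum_prod_factorial_mul_contingencyTable _ _ fun D => ∏ i, ∏ j, W i j ^ D i j,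
    ← htables]
  have hcancel (k : ℕ) : (1 : ℝ) / k ! * k ! = 1 := one_div_mul_cancel (by positivity)
  rw [← mul_assoc, mul_mul_mul_comm, ← prod_mul_distrib, ← prod_mul_distrib]
  simp only [card_sigma_fiber_fst, hcancel, prod_const_one, one_mul]

theorem tableWeight_eq_integral_perm {m n N : ℕ}
    (W : Fin m → Fin n → ℝ) (hW : ∀ i j, 0 < W i j)
    (R : Fin m → ℕ) (C : Fin n → ℕ)
    (hRpos : ∀ i, 0 < R i) (hCpos : ∀ j, 0 < C j)
    (hRN : ∑ i, R i = N) (hCN : ∑ j, C j = N) :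
    tableWeight R C W =
      (∏ i, (1 : ℝ) / (Nat.factorial (R i) : ℝ)) *
      (∏ j, (1 : ℝ) / (Nat.factorial (C j) : ℝ)) *
      ∫ G, perm (blockMat G R C) ∂(expMeasure W) :=
  tableWeight_eq_integral_perm_general W hW R C
end

section
/- The function b ↦ b^b / Γ(b+1) is log-convex on the positive reals, i.e., for all b_1, b_2 > 0 and all α, β ≥ 0 with α + β = 1, one has (αb_1+βb_2)^{αb_1+βb_2} / Γ(αb_1+βb_2+1) ≤ (b_1^{b_1}/Γ(b_1+1))^α · (b_2^{b_2}/Γ(b_2+1))^β. (Note: the inequality direction is that of log-convexity; equivalently, log(b^b/Γ(b+1)) is a convex function of b > 0.) -/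
/-!
Write `log (b ^ b / Γ(b + 1)) = b log b - log Γ(b + 1)` and approximate `log Γ(b + 1)` by Gauss's
`logGammaSeq (b + 1) n = (b + 1) log n + log n! - ∑_{m ≤ n} log (b + 1 + m)`. Each approximant
`b log b - logGammaSeq (b + 1) n` is convex on `b > 0`: its second derivative
`1 / b - ∑_{m ≤ n} 1 / (b + 1 + m) ^ 2` is nonnegative because the bound
`1 / (b + 1 + m) ^ 2 ≤ 1 / (b + m) - 1 / (b + m + 1)` telescopes. Convexity survives the pointwise
limit, and exponentiating the convexity inequality of the logarithm gives the claim.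
-/

open Real Set Filter Finset Topology
open Real.BohrMollerup (logGammaSeq tendsto_log_gamma)

theorem ConvexOn.of_tendsto {𝕜 E β ι : Type*} [Semiring 𝕜] [PartialOrder 𝕜]
    [AddCommMonoid E] [SMul 𝕜 E] [AddCommMonoid β] [PartialOrder β] [SMul 𝕜 β]
    [TopologicalSpace β] [ContinuousAdd β] [ContinuousConstSMul 𝕜 β] [OrderClosedTopology β]
    {l : Filter ι} [l.NeBot] {s : Set E} {f : ι → E → β} {g : E → β}
    (hf : ∀ i, ConvexOn 𝕜 s (f i)) (hg : ∀ x ∈ s, Tendsto (fun i ↦ f i x) l (𝓝 (g x))) :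
    ConvexOn 𝕜 s g := by
  obtain ⟨i⟩ := l.nonempty_of_neBot
  refine ⟨(hf i).1, fun x hx y hy a b ha hb hab ↦ ?_⟩
  exact le_of_tendsto_of_tendsto (hg _ ((hf i).1 hx hy ha hb hab))
    (((hg x hx).const_smul a).add ((hg y hy).const_smul b))
    (Eventually.of_forall fun j ↦ (hf j).2 hx hy ha hb hab)

theorem ConvexOn.le_rpow_mul_rpow_of_log {E : Type*} [AddCommMonoid E] [Module ℝ E]
    {s : Set E} {F : E → ℝ} (hF : ConvexOn ℝ s fun x ↦ log (F x)) (hpos : ∀ x ∈ s, 0 < F x)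
    {x y : E} (hx : x ∈ s) (hy : y ∈ s) {a b : ℝ} (ha : 0 ≤ a) (hb : 0 ≤ b) (hab : a + b = 1) :
    F (a • x + b • y) ≤ F x ^ a * F y ^ b :=
  calc F (a • x + b • y) = exp (log (F (a • x + b • y))) :=
        (exp_log (hpos _ (hF.1 hx hy ha hb hab))).symm
    _ ≤ exp (a * log (F x) + b * log (F y)) := exp_le_exp.2 (hF.2 hx hy ha hb hab)
    _ = F x ^ a * F y ^ b := by
        rw [exp_add, rpow_def_of_pos (hpos x hx), rpow_def_of_pos (hpos y hy), mul_comm a,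
          mul_comm b]

theorem sum_range_inv_add_one_add_sq_le_inv {x : ℝ} (hx : 0 < x) (N : ℕ) :
    ∑ m ∈ range N, ((x + 1 + m) ^ 2)⁻¹ ≤ x⁻¹ :=
  calc ∑ m ∈ range N, ((x + 1 + m) ^ 2)⁻¹
      ≤ ∑ m ∈ range N, ((x + m)⁻¹ - (x + (m + 1 : ℕ))⁻¹) := by
        gcongr with m
        have hm : 0 < x + m := by positivity
        rw [Nat.cast_succ, ← add_assoc, inv_sub_inv hm.ne' (by positivity), add_sub_cancel_left,
          one_div, add_right_comm]
        gcongr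
        nlinarith
    _ = x⁻¹ - (x + N)⁻¹ := by rw [sum_range_sub' (fun m : ℕ ↦ (x + m)⁻¹), Nat.cast_zero, add_zero]
    _ ≤ x⁻¹ := sub_le_self _ (by positivity)

theorem hasDerivAt_logGammaSeq (n : ℕ) {x : ℝ} (hx : 0 < x) :
    HasDerivAt (logGammaSeq · n) (log n - ∑ m ∈ range (n + 1), (x + m)⁻¹) x := by
  have hlog : ∀ m : ℕ, HasDerivAt (fun y : ℝ ↦ log (y + m)) (x + m)⁻¹ x := fun m ↦ by
    simpa using ((hasDerivAt_id x).add_const (m : ℝ)).log (by positivity)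
  exact ((hasDerivAt_mul_const (log n)).add_const _).fun_sub
    (HasDerivAt.fun_sum fun m _ ↦ hlog m)

theorem hasDerivAt_sum_range_inv_add (N : ℕ) {x : ℝ} (hx : 0 < x) :
    HasDerivAt (fun y : ℝ ↦ ∑ m ∈ range N, (y + m)⁻¹) (-∑ m ∈ range N, ((x + m) ^ 2)⁻¹) x := by
  rw [← sum_neg_distrib]
  refine HasDerivAt.fun_sum fun m _ ↦ ?_
  simpa [neg_div] using ((hasDerivAt_id x).add_const (m : ℝ)).fun_inv (by positivity)

theorem convexOn_mul_log_sub_logGammaSeq (n : ℕ) :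
    ConvexOn ℝ (Ioi 0) fun x ↦ x * log x - logGammaSeq (x + 1) n := by
  have hf : ∀ x : ℝ, 0 < x → HasDerivAt (fun x ↦ x * log x - logGammaSeq (x + 1) n)
      (log x + 1 - (log n - ∑ m ∈ range (n + 1), (x + 1 + m)⁻¹)) x := fun x hx ↦
    (hasDerivAt_mul_log hx.ne').sub
      ((hasDerivAt_logGammaSeq n (by positivity)).comp_add_const x 1)
  have hf' : ∀ x : ℝ, 0 < x →
      HasDerivAt (fun x ↦ log x + 1 - (log n - ∑ m ∈ range (n + 1), (x + 1 + m)⁻¹))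
        (x⁻¹ - ∑ m ∈ range (n + 1), ((x + 1 + m) ^ 2)⁻¹) x := fun x hx ↦
    (((hasDerivAt_log hx.ne').add_const 1).fun_sub
      (((hasDerivAt_sum_range_inv_add (n + 1) (by positivity)).const_sub (log n)).comp_add_const
        x 1)).congr_deriv (by rw [neg_neg])
  exact convexOn_of_hasDerivWithinAt2_nonneg (convex_Ioi 0)
    (fun x hx ↦ (hf x hx).continuousAt.continuousWithinAt)
    (fun x hx ↦ (hf x (interior_subset hx)).hasDerivWithinAt)
    (fun x hx ↦ (hf' x (interior_subset hx)).hasDerivWithinAt)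
    (fun x hx ↦ sub_nonneg.2 (sum_range_inv_add_one_add_sq_le_inv (interior_subset hx) _))

theorem convexOn_mul_log_sub_log_Gamma_add_one :
    ConvexOn ℝ (Ioi 0) fun x ↦ x * log x - log (Gamma (x + 1)) :=
  ConvexOn.of_tendsto (l := atTop) convexOn_mul_log_sub_logGammaSeq fun _ hx ↦
    tendsto_const_nhds.sub (tendsto_log_gamma (add_pos hx one_pos))

theorem log_convex_self_pow_div_gamma (b₁ b₂ α β : ℝ)
    (hb₁ : 0 < b₁) (hb₂ : 0 < b₂)
    (hα : 0 ≤ α) (hβ : 0 ≤ β) (hαβ : α + β = 1) :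
    (α * b₁ + β * b₂) ^ (α * b₁ + β * b₂) / Real.Gamma (α * b₁ + β * b₂ + 1) ≤
      (b₁ ^ b₁ / Real.Gamma (b₁ + 1)) ^ α * (b₂ ^ b₂ / Real.Gamma (b₂ + 1)) ^ β := by
  have hpos : ∀ b ∈ Ioi (0 : ℝ), 0 < b ^ b / Gamma (b + 1) := fun b hb ↦
    div_pos (rpow_pos_of_pos hb b) (Gamma_pos_of_pos (add_pos hb one_pos))
  have hlog : ConvexOn ℝ (Ioi 0) fun b ↦ log (b ^ b / Gamma (b + 1)) :=
    convexOn_mul_log_sub_log_Gamma_add_one.congr fun b hb ↦ by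
      rw [log_div (rpow_pos_of_pos hb b).ne' (Gamma_pos_of_pos (add_pos hb one_pos)).ne',
        log_rpow hb]
  exact hlog.le_rpow_mul_rpow_of_log hpos hb₁ hb₂ hα hβ hαβ
end

section
/- Let a_1,…,a_n be integers with a_1+…+a_n = 0, and suppose the partial sums r_k = a_1+…+a_k are positive for k=1,…,n−1. Let φ(a_1,…,a_n) be the Kostant partition function, i.e., the number of families (x(e)) of nonnegative integers indexed by the pairs e = (i→j) with n ≥ i > j ≥ 1 such that at every vertex v ∈ {1,…,n} one has Σ_{e: head(e)=v} x(e) − Σ_{e: tail(e)=v} x(e) = a_v (where the edge i→j has tail i and head j). Define the (n−1)×(n−1) matrix W=(w_{ij}) by w_{ij} = 1 if i ≥ j−1 and w_{ij} = 0 otherwise, and set R = C = (r_1,…,r_{n−1}). Then φ(a_1,…,a_n) = T(R,C;W). -/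
open scoped BigOperators

/-- The Kostant partition function `φ(a)`: the number of integer feasible flows on the
complete acyclic digraph on `{1,…,n}` with edges `i → j` for `i > j` (tail `i`, head `j`)
and excess `a v` at every vertex `v`. A flow is encoded as `x : Fin n → Fin n → ℕ` with
`x i j` the flow on the edge `i → j`, vanishing unless `j < i`. -/
noncomputable def kostant {n : ℕ} (a : Fin n → ℤ) : ℕ :=
  Nat.card {x : Fin n → Fin n → ℕ //
    (∀ i j, x i j ≠ 0 → j < i) ∧
    ∀ v, (∑ i, (x i v : ℤ)) - ∑ j, (x v j : ℤ) = a v}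

/-!
Vertices are `0, …, n - 1` here, so vertex `k` is the paper's `k + 1` and `R k = r_{k+1}`.

With `n = m + 1`, a flow `x` becomes the `m × m` table whose entry `(i, j)` is `x (i+1 → j)`
for `j ≤ i`, whose superdiagonal entry `(j - 1, j)` is the flow on edges jumping over vertex `j`,
and which vanishes further up. Row `i` then counts the edges crossing the cut between `{0, …, i}`
and `{i+1, …, m}`, sorted by whether they leave `i + 1`; column `j` counts the edges crossing
the cut at `j`, sorted by whether they enter `j`. Conservation makes the flow across the cut
at `k` equal to `a 0 + ⋯ + a k = R k`. Conversely, the lower part of a table is a flow: at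
vertex `i + 1` the inflow is column `i + 1` and the outflow is row `i`, each minus the common
entry `(i, i + 1)`. Both maps are injective on the finite sets in question.
-/

open Finset

section ZeroOneWeights

variable {m n : ℕ}

lemma finite_contingencyTables (R : Fin m → ℕ) (C : Fin n → ℕ) :
    Finite {D : Fin m → Fin n → ℕ // (∀ i, ∑ j, D i j = R i) ∧ (∀ j, ∑ i, D i j = C j)} := by
  refine Finite.of_injective
    (fun D i j => (⟨D.1 i j, Nat.lt_succ_of_le ?_⟩ : Fin (R i + 1))) fun D E h => ?_
  · exact D.2.1 i ▸ single_le_sum (fun _ _ => Nat.zero_le _) (mem_univ j)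
  · ext i j
    exact congrArg Fin.val (congrFun (congrFun h i) j)

lemma prod_prod_boole_pow {ι κ M : Type*} [Fintype ι] [Fintype κ] [CommMonoidWithZero M]
    [Nontrivial M] [NoZeroDivisors M] (P : ι → κ → Prop) [∀ i j, Decidable (P i j)]
    (D : ι → κ → ℕ) :
    ∏ i, ∏ j, (if P i j then (1 : M) else 0) ^ D i j =
      if ∀ i j, D i j ≠ 0 → P i j then 1 else 0 := by
  have hpow : ∀ i j, (if P i j then (1 : M) else 0) ^ D i j =
      if D i j ≠ 0 → P i j then 1 else 0 := fun i j => by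
    by_cases hP : P i j <;> by_cases hD : D i j = 0 <;> simp [hP, hD]
  simp only [hpow, prod_boole, mem_univ, true_implies]

lemma tableWeight_eq_card (R : Fin m → ℕ) (C : Fin n → ℕ) (W : Fin m → Fin n → ℝ)
    (P : Fin m → Fin n → Prop) [∀ i j, Decidable (P i j)]
    (hW : ∀ i j, W i j = if P i j then 1 else 0) :
    tableWeight R C W = Nat.card {D : Fin m → Fin n → ℕ //
      ((∀ i, ∑ j, D i j = R i) ∧ (∀ j, ∑ i, D i j = C j)) ∧ ∀ i j, D i j ≠ 0 → P i j} := by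
  have := finite_contingencyTables R C
  have := Fintype.ofFinite
    {D : Fin m → Fin n → ℕ // (∀ i, ∑ j, D i j = R i) ∧ (∀ j, ∑ i, D i j = C j)}
  simp only [tableWeight, tsum_fintype, hW, prod_prod_boole_pow]
  -- `erw`: the decidability instance of the `∀` differs from the one `sum_boole` synthesizes
  erw [sum_boole, ← Fintype.card_subtype, ← Nat.card_eq_fintype_card]
  exact congrArg _ (Nat.card_congr (Equiv.subtypeSubtypeEquivSubtypeInter
    (fun D : Fin m → Fin n → ℕ => (∀ i, ∑ j, D i j = R i) ∧ ∀ j, ∑ i, D i j = C j)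
    fun D => ∀ i j, D i j ≠ 0 → P i j))

end ZeroOneWeights

section Flows

variable {n : ℕ}

def IsFlow (a : Fin n → ℤ) (x : Fin n → Fin n → ℕ) : Prop :=
  (∀ i j, x i j ≠ 0 → j < i) ∧ ∀ v, (∑ i, (x i v : ℤ)) - ∑ j, (x v j : ℤ) = a v

def partialSum (a : Fin n → ℤ) (k : ℕ) : ℤ :=
  ∑ v ∈ univ.filter (fun v : Fin n => (v : ℕ) ≤ k), a v

def cutFlow (x : Fin n → Fin n → ℕ) (k : ℕ) : ℕ :=
  ∑ i : Fin n, ∑ j : Fin n, if (j : ℕ) ≤ k ∧ k < (i : ℕ) then x i j else 0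

def jumpFlow (x : Fin n → Fin n → ℕ) (v : ℕ) : ℕ :=
  ∑ i : Fin n, ∑ j : Fin n, if (j : ℕ) < v ∧ v < (i : ℕ) then x i j else 0

lemma partialSum_zero (a : Fin (n + 1) → ℤ) : partialSum a 0 = a 0 := by
  rw [partialSum, ← sum_singleton a 0]
  congr 1
  ext v
  simp only [mem_filter, mem_univ, true_and, mem_singleton, Nat.le_zero, Fin.val_eq_zero_iff]

lemma partialSum_add_one (a : Fin n → ℤ) (v : Fin n) {k : ℕ} (hv : (v : ℕ) = k + 1) :
    partialSum a (k + 1) = partialSum a k + a v := by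
  have : univ.filter (fun u : Fin n => (u : ℕ) ≤ k + 1) =
      insert v (univ.filter fun u : Fin n => (u : ℕ) ≤ k) := by
    ext u
    simp only [mem_filter, mem_univ, true_and, mem_insert, Fin.ext_iff]
    omega
  rw [partialSum, this, sum_insert (by simp only [mem_filter, mem_univ, true_and]; omega), add_comm]
  rfl

lemma partialSum_of_le (a : Fin n → ℤ) {k : ℕ} (hk : n ≤ k + 1) : partialSum a k = ∑ v, a v := by
  rw [partialSum, filter_true_of_mem fun v _ => by omega]

lemma jumpFlow_zero (x : Fin n → Fin n → ℕ) : jumpFlow x 0 = 0 := by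
  simp [jumpFlow]

lemma jumpFlow_of_le (x : Fin n → Fin n → ℕ) {v : ℕ} (hv : n ≤ v + 1) : jumpFlow x v = 0 := by
  refine sum_eq_zero fun i _ => sum_eq_zero fun j _ => if_neg ?_
  have := i.isLt
  omega

variable {x : Fin n → Fin n → ℕ}

lemma apply_eq_zero_of_not_lt (hx : ∀ i j, x i j ≠ 0 → j < i) {i j : Fin n} (h : ¬ j < i) :
    x i j = 0 :=
  by_contra fun h' => h (hx i j h')

lemma cutFlow_eq_partialSum_excess (hx : ∀ i j, x i j ≠ 0 → j < i) (k : ℕ) :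
    (cutFlow x k : ℤ) = partialSum (fun v => (∑ i, (x i v : ℤ)) - ∑ j, (x v j : ℤ)) k := by
  have hsplit : ∀ i j : Fin n, ((if (j : ℕ) ≤ k ∧ k < (i : ℕ) then x i j else 0 : ℕ) : ℤ) =
      (if (j : ℕ) ≤ k then (x i j : ℤ) else 0) - if (i : ℕ) ≤ k then (x i j : ℤ) else 0 := by
    intro i j
    by_cases h : x i j = 0
    · simp [h]
    · have := Fin.lt_def.mp (hx i j h)
      split_ifs <;> omega
  simp only [cutFlow, partialSum, Nat.cast_sum, hsplit, sum_sub_distrib]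
  rw [sum_comm (s := univ.filter _)]
  simp only [sum_filter, sum_ite_irrel, sum_const_zero]

lemma IsFlow.cutFlow_eq {a : Fin n → ℤ} (hx : IsFlow a x) (k : ℕ) :
    (cutFlow x k : ℤ) = partialSum a k := by
  rw [cutFlow_eq_partialSum_excess hx.1, funext hx.2]

lemma cutFlow_eq_inflow_add_jumpFlow (hx : ∀ i j, x i j ≠ 0 → j < i) (v : Fin n) :
    cutFlow x v = ∑ i, x i v + jumpFlow x v := by
  have hsplit : ∀ i j : Fin n, (if (j : ℕ) ≤ v ∧ (v : ℕ) < (i : ℕ) then x i j else 0) =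
      (if j = v then x i j else 0) + if (j : ℕ) < v ∧ (v : ℕ) < (i : ℕ) then x i j else 0 := by
    intro i j
    by_cases h : x i j = 0
    · simp [h]
    · have := Fin.lt_def.mp (hx i j h)
      simp only [Fin.ext_iff]
      split_ifs <;> omega
  simp only [cutFlow, jumpFlow, hsplit, sum_add_distrib, sum_ite_eq', mem_univ, if_true]

lemma cutFlow_eq_outflow_add_jumpFlow (hx : ∀ i j, x i j ≠ 0 → j < i) (v : Fin n) (k : ℕ)
    (hv : (v : ℕ) = k + 1) : cutFlow x k = ∑ j, x v j + jumpFlow x v := by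
  have hsplit : ∀ i j : Fin n, (if (j : ℕ) ≤ k ∧ k < (i : ℕ) then x i j else 0) =
      (if i = v then x i j else 0) + if (j : ℕ) < v ∧ (v : ℕ) < (i : ℕ) then x i j else 0 := by
    intro i j
    by_cases h : x i j = 0
    · simp [h]
    · have := Fin.lt_def.mp (hx i j h)
      simp only [Fin.ext_iff]
      split_ifs <;> omega
  simp only [cutFlow, jumpFlow, hsplit, sum_add_distrib]
  rw [sum_comm (f := fun i j => if i = v then x i j else 0)]
  simp only [sum_ite_eq', mem_univ, if_true]

end Flows

section HessenbergTables

variable {m : ℕ}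

def IsHessenbergTable (R : Fin m → ℕ) (D : Fin m → Fin m → ℕ) : Prop :=
  ((∀ i, ∑ j, D i j = R i) ∧ ∀ j, ∑ i, D i j = R j) ∧ ∀ i j, D i j ≠ 0 → (j : ℕ) ≤ i + 1

def toTable (x : Fin (m + 1) → Fin (m + 1) → ℕ) (i j : Fin m) : ℕ :=
  if j ≤ i then x i.succ j.castSucc else if j.castSucc = i.succ then jumpFlow x j else 0

def toFlow (D : Fin m → Fin m → ℕ) : Fin (m + 1) → Fin (m + 1) → ℕ :=
  Fin.cases (fun _ => 0) fun i => Fin.lastCases 0 fun j => if j ≤ i then D i j else 0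

lemma toTable_eq_add (x : Fin (m + 1) → Fin (m + 1) → ℕ) (i j : Fin m) :
    toTable x i j = (if j ≤ i then x i.succ j.castSucc else 0) +
      if j.castSucc = i.succ then jumpFlow x j else 0 := by
  have : j.castSucc = i.succ → ¬ j ≤ i := fun h hle => by
    rw [Fin.ext_iff, Fin.val_castSucc, Fin.val_succ] at h
    exact absurd hle (by rw [Fin.le_def]; omega)
  unfold toTable
  split_ifs <;> simp_all

lemma toTable_ne_zero (x : Fin (m + 1) → Fin (m + 1) → ℕ) {i j : Fin m}
    (h : toTable x i j ≠ 0) : (j : ℕ) ≤ i + 1 := by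
  unfold toTable at h
  split_ifs at h with h₁ h₂
  · exact (Fin.le_def.1 h₁).trans (Nat.le_succ _)
  · exact (congrArg Fin.val h₂).le
  · exact absurd rfl h

section toTable

variable {x : Fin (m + 1) → Fin (m + 1) → ℕ}

lemma sum_toTable_row (hx : ∀ i j, x i j ≠ 0 → j < i) (i : Fin m) :
    ∑ j, toTable x i j = cutFlow x i := by
  have hout : ∑ j : Fin m, (if j ≤ i then x i.succ j.castSucc else 0) = ∑ j, x i.succ j := by
    rw [Fin.sum_univ_castSucc, apply_eq_zero_of_not_lt hx (Fin.le_last _).not_gt, add_zero]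
    refine sum_congr rfl fun j _ => ite_eq_left_iff.2 fun hj => ?_
    exact (apply_eq_zero_of_not_lt hx (mt Fin.castSucc_lt_succ_iff.1 hj)).symm
  have hjump : ∑ j : Fin m, (if j.castSucc = i.succ then jumpFlow x j else 0) =
      jumpFlow x (i.succ : ℕ) := by
    rcases Fin.eq_castSucc_or_eq_last i.succ with ⟨j₀, hj₀⟩ | hlast
    · simp [hj₀, Fin.castSucc_inj]
    · simp [hlast, Fin.castSucc_ne_last, jumpFlow_of_le]
  rw [cutFlow_eq_outflow_add_jumpFlow hx i.succ i (Fin.val_succ i), ← hout, ← hjump,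
    ← sum_add_distrib]
  exact sum_congr rfl fun j _ => toTable_eq_add x i j

lemma sum_toTable_col (hx : ∀ i j, x i j ≠ 0 → j < i) (j : Fin m) :
    ∑ i, toTable x i j = cutFlow x j := by
  have hin : ∑ i : Fin m, (if j ≤ i then x i.succ j.castSucc else 0) = ∑ i, x i j.castSucc := by
    rw [Fin.sum_univ_succ, apply_eq_zero_of_not_lt hx (Fin.not_lt_zero _), zero_add]
    refine sum_congr rfl fun i _ => ite_eq_left_iff.2 fun hi => ?_
    exact (apply_eq_zero_of_not_lt hx (mt Fin.castSucc_lt_succ_iff.1 hi)).symm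
  have hjump : ∑ i : Fin m, (if j.castSucc = i.succ then jumpFlow x j else 0) =
      jumpFlow x j := by
    rcases Fin.eq_zero_or_eq_succ j.castSucc with h0 | ⟨i₀, hi₀⟩
    · have : (j : ℕ) = 0 := congrArg Fin.val h0
      simp [h0, (Fin.succ_ne_zero _).symm, this, jumpFlow_zero]
    · simp [hi₀, Fin.succ_inj]
  rw [← Fin.val_castSucc, cutFlow_eq_inflow_add_jumpFlow hx, Fin.val_castSucc, ← hin, ← hjump,
    ← sum_add_distrib]
  exact sum_congr rfl fun i _ => toTable_eq_add x i j

lemma IsFlow.isHessenbergTable_toTable {a : Fin (m + 1) → ℤ} (hx : IsFlow a x) {R : Fin m → ℕ}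
    (hR : ∀ k : Fin m, (R k : ℤ) = partialSum a k) : IsHessenbergTable R (toTable x) := by
  have hcut : ∀ k : Fin m, cutFlow x k = R k := fun k => by
    exact_mod_cast (hx.cutFlow_eq k).trans (hR k).symm
  exact ⟨⟨fun i => (sum_toTable_row hx.1 i).trans (hcut i),
    fun j => (sum_toTable_col hx.1 j).trans (hcut j)⟩, fun _ _ => toTable_ne_zero x⟩

end toTable

section toFlow

variable (D : Fin m → Fin m → ℕ)

@[simp] lemma toFlow_zero (j : Fin (m + 1)) : toFlow D 0 j = 0 := rfl

@[simp] lemma toFlow_succ_last (i : Fin m) : toFlow D i.succ (Fin.last m) = 0 := by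
  simp [toFlow]

@[simp] lemma toFlow_succ_castSucc (i j : Fin m) :
    toFlow D i.succ j.castSucc = if j ≤ i then D i j else 0 := by
  simp [toFlow]

lemma toFlow_ne_zero {i j : Fin (m + 1)} (h : toFlow D i j ≠ 0) : j < i := by
  induction i using Fin.cases with
  | zero => exact absurd (toFlow_zero D j) h
  | succ i =>
    induction j using Fin.lastCases with
    | last => exact absurd (toFlow_succ_last D i) h
    | cast j =>
      rw [toFlow_succ_castSucc] at h
      exact Fin.castSucc_lt_succ_iff.2 (of_not_not fun hj => h (if_neg hj))

lemma toFlow_toTable {x : Fin (m + 1) → Fin (m + 1) → ℕ} (hx : ∀ i j, x i j ≠ 0 → j < i) : toFlow (toTable x) = x := by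
  funext i j
  induction i using Fin.cases with
  | zero => exact (apply_eq_zero_of_not_lt hx (Fin.not_lt_zero j)).symm
  | succ i =>
    induction j using Fin.lastCases with
    | last => rw [toFlow_succ_last, apply_eq_zero_of_not_lt hx (Fin.le_last _).not_gt]
    | cast j =>
      rw [toFlow_succ_castSucc]
      by_cases hj : j ≤ i
      · rw [if_pos hj, toTable, if_pos hj]
      · rw [if_neg hj, apply_eq_zero_of_not_lt hx (mt Fin.castSucc_lt_succ_iff.1 hj)]

lemma sum_toFlow_castSucc (j : Fin m) :
    ∑ i, toFlow D i j.castSucc = ∑ i, if j ≤ i then D i j else 0 := by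
  simp [Fin.sum_univ_succ]

lemma sum_toFlow_last : ∑ i, toFlow D i (Fin.last m) = 0 := by
  simp [Fin.sum_univ_succ]

lemma sum_toFlow_succ (i : Fin m) :
    ∑ j, toFlow D i.succ j = ∑ j, if j ≤ i then D i j else 0 := by
  simp [Fin.sum_univ_castSucc]

lemma sum_toFlow_zero : ∑ j, toFlow D 0 j = 0 := by
  simp

variable {D} {R : Fin m → ℕ}

lemma eq_ite_add_ite (hD : ∀ i j, D i j ≠ 0 → (j : ℕ) ≤ i + 1) (i j : Fin m) :
    D i j = (if j ≤ i then D i j else 0) + if j.castSucc = i.succ then D i j else 0 := by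
  by_cases h : D i j = 0
  · simp [h]
  · have := hD i j h
    have hle : j ≤ i ↔ (j : ℕ) ≤ i := Fin.le_def
    have heq : j.castSucc = i.succ ↔ (j : ℕ) = i + 1 := Fin.ext_iff
    simp only [hle, heq]
    split_ifs <;> omega

lemma IsHessenbergTable.sum_toFlow_castSucc_add (hD : IsHessenbergTable R D) (j : Fin m) :
    ∑ i, toFlow D i j.castSucc + ∑ i, (if j.castSucc = i.succ then D i j else 0) = R j := by
  rw [sum_toFlow_castSucc, ← sum_add_distrib, ← hD.1.2 j]
  exact sum_congr rfl fun i _ => (eq_ite_add_ite hD.2 i j).symm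

lemma IsHessenbergTable.sum_toFlow_succ_add (hD : IsHessenbergTable R D) (i : Fin m) :
    ∑ j, toFlow D i.succ j + ∑ j, (if j.castSucc = i.succ then D i j else 0) = R i := by
  rw [sum_toFlow_succ, ← sum_add_distrib, ← hD.1.1 i]
  exact sum_congr rfl fun j _ => (eq_ite_add_ite hD.2 i j).symm

variable {a : Fin (m + 1) → ℤ}

lemma IsHessenbergTable.excess_toFlow_castSucc (hD : IsHessenbergTable R D)
    (hR : ∀ k : Fin m, (R k : ℤ) = partialSum a k) (j : Fin m) :
    ((∑ i, toFlow D i j.castSucc : ℕ) : ℤ) - (∑ k, toFlow D j.castSucc k : ℕ) = a j.castSucc := by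
  have hin := hD.sum_toFlow_castSucc_add j
  rcases Fin.eq_zero_or_eq_succ j.castSucc with h0 | ⟨i, hi⟩
  · simp only [h0, (Fin.succ_ne_zero _).symm, if_false, sum_const_zero, add_zero] at hin
    have hj : (j : ℕ) = 0 := congrArg Fin.val h0
    rw [h0, sum_toFlow_zero, hin, hR, hj, partialSum_zero, Nat.cast_zero, sub_zero]
  · have hj : (j : ℕ) = i + 1 := congrArg Fin.val hi
    have hin_super : ∑ i', (if j.castSucc = i'.succ then D i' j else 0) = D i j := by
      simp [hi, Fin.succ_inj]
    have hout_super : ∑ j', (if j'.castSucc = i.succ then D i j' else 0) = D i j := by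
      simp [← hi, Fin.castSucc_inj]
    have hout := hD.sum_toFlow_succ_add i
    have hstep := partialSum_add_one a j.castSucc hj
    rw [← hj, ← hR, ← hR] at hstep
    rw [hin_super] at hin
    rw [hout_super, ← hi] at hout
    omega

lemma IsHessenbergTable.excess_toFlow_last (hD : IsHessenbergTable R D) (ha : ∑ v, a v = 0)
    (hR : ∀ k : Fin m, (R k : ℤ) = partialSum a k) :
    ((∑ i, toFlow D i (Fin.last m) : ℕ) : ℤ) - (∑ j, toFlow D (Fin.last m) j : ℕ) =
      a (Fin.last m) := by
  rw [sum_toFlow_last]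
  rcases Fin.eq_zero_or_eq_succ (Fin.last m) with h0 | ⟨i, hi⟩
  · have hm : m = 0 := congrArg Fin.val h0
    rw [h0, sum_toFlow_zero, ← partialSum_zero a, partialSum_of_le a (by omega), ha]
    rfl
  · have hout := hD.sum_toFlow_succ_add i
    have hout_super : ∑ j, (if j.castSucc = i.succ then D i j else 0) = 0 := by
      simp [← hi, Fin.castSucc_ne_last]
    have hm : m = i + 1 := congrArg Fin.val hi
    have hstep := partialSum_add_one a (Fin.last m) hm
    rw [partialSum_of_le a (by omega), ha, ← hR] at hstep
    rw [hout_super, add_zero, ← hi] at hout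
    omega

lemma IsHessenbergTable.isFlow_toFlow (hD : IsHessenbergTable R D) (ha : ∑ v, a v = 0)
    (hR : ∀ k : Fin m, (R k : ℤ) = partialSum a k) : IsFlow a (toFlow D) := by
  refine ⟨fun _ _ => toFlow_ne_zero D, fun v => ?_⟩
  rw [← Nat.cast_sum, ← Nat.cast_sum]
  rcases Fin.eq_castSucc_or_eq_last v with ⟨j, rfl⟩ | rfl
  exacts [hD.excess_toFlow_castSucc hR j, hD.excess_toFlow_last ha hR]

lemma IsHessenbergTable.eq_of_toFlow_eq {D' : Fin m → Fin m → ℕ} (hD : IsHessenbergTable R D)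
    (hD' : IsHessenbergTable R D') (h : toFlow D = toFlow D') : D = D' := by
  funext i j
  rw [eq_ite_add_ite hD.2 i j, eq_ite_add_ite hD'.2 i j]
  congr 1
  · simpa using congrFun (congrFun h i.succ) j.castSucc
  · by_cases hji : j.castSucc = i.succ
    · have hsuper : ∀ E : Fin m → Fin m → ℕ,
          ∑ j', (if j'.castSucc = i.succ then E i j' else 0) = E i j := fun E => by
        simp [← hji, Fin.castSucc_inj]
      have h₁ := hD.sum_toFlow_succ_add i
      have h₂ := hD'.sum_toFlow_succ_add i
      rw [hsuper, h] at h₁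
      rw [hsuper] at h₂
      simp only [hji, if_true]
      omega
    · simp only [hji, if_false]

end toFlow

theorem card_flows_eq_card_hessenbergTables {a : Fin (m + 1) → ℤ} (ha : ∑ v, a v = 0)
    {R : Fin m → ℕ} (hR : ∀ k : Fin m, (R k : ℤ) = partialSum a k) :
    Nat.card {x // IsFlow a x} = Nat.card {D // IsHessenbergTable R D} := by
  have : Finite {D // IsHessenbergTable R D} :=
    have := finite_contingencyTables R R
    Finite.of_injective _ (Subtype.impEmbedding _ _ fun _ hD => hD.1).injective
  let toT : {x // IsFlow a x} → {D // IsHessenbergTable R D} :=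
    fun x => ⟨toTable x.1, x.2.isHessenbergTable_toTable hR⟩
  have hT : Function.Injective toT := fun x y h => Subtype.ext <| by
    rw [← toFlow_toTable x.2.1, ← toFlow_toTable y.2.1]
    exact congrArg (toFlow ∘ Subtype.val) h
  have : Finite {x // IsFlow a x} := Finite.of_injective toT hT
  let toF : {D // IsHessenbergTable R D} → {x // IsFlow a x} :=
    fun D => ⟨toFlow D.1, D.2.isFlow_toFlow ha hR⟩
  have hF : Function.Injective toF := fun D E h =>
    Subtype.ext (D.2.eq_of_toFlow_eq E.2 (congrArg Subtype.val h))
  exact le_antisymm (Nat.card_le_card_of_injective toT hT) (Nat.card_le_card_of_injective toF hF)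

end HessenbergTables

theorem kostant_eq_tableWeight_general {n : ℕ} (a : Fin n → ℤ) (ha : ∑ v, a v = 0)
    (R : Fin (n - 1) → ℕ)
    (hR : ∀ k : Fin (n - 1),
      (R k : ℤ) = ∑ i ∈ Finset.univ.filter (fun i : Fin n => (i : ℕ) ≤ (k : ℕ)), a i)
    (W : Fin (n - 1) → Fin (n - 1) → ℝ)
    (hW : ∀ i j, W i j = if (j : ℕ) ≤ (i : ℕ) + 1 then 1 else 0) :
    (kostant a : ℝ) = tableWeight R R W := by
  rw [tableWeight_eq_card R R W (fun i j => (j : ℕ) ≤ i + 1) hW]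
  norm_cast
  cases n with
  | zero => simp [kostant]
  | succ m => exact card_flows_eq_card_hessenbergTables ha hR

theorem kostant_eq_tableWeight {n : ℕ} (a : Fin n → ℤ) (ha : ∑ v, a v = 0)
    (R : Fin (n - 1) → ℕ)
    (hR : ∀ k : Fin (n - 1),
      (R k : ℤ) = ∑ i ∈ Finset.univ.filter (fun i : Fin n => (i : ℕ) ≤ (k : ℕ)), a i)
    (hRpos : ∀ k, 0 < R k)
    (W : Fin (n - 1) → Fin (n - 1) → ℝ)
    (hW : ∀ i j, W i j = if (j : ℕ) ≤ (i : ℕ) + 1 then 1 else 0) :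
    (kostant a : ℝ) = tableWeight R R W :=
  kostant_eq_tableWeight_general a ha R hR W hW
end
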